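/- arXiv:2112.10610 — 6 statements merged into one kernel-verified Lean document; each statement's English description precedes it below -/
import Mathlib

section
/- Let p be a prime and r a positive integer. Let c : ℤ/p^rℤ × ℤ/p^rℤ → ℤ/pℤ be a 2-cocycle for the trivial action of ℤ/p^rℤ on ℤ/pℤ, and let σ be a unit of ℤ/p^rℤ with σ^{p-1} = 1. Define the 2-cocycle d by d(x,y) = c(σx, σy). If c is not a 2-coboundary, then d is cohomologous to c if and only if σ = 1. -/
private lemma sum_range_zmod_aux {n : ℕ} [NeZero n] {M : Type*} [AddCommMonoid M]
    (f : ZMod n → M) :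
    ∑ i ∈ Finset.range n, f (i : ZMod n) = ∑ x : ZMod n, f x := by
  refine Finset.sum_nbij' (fun i => (i : ZMod n)) (fun x => x.val) ?_ ?_ ?_ ?_ ?_
  · intro i _; exact Finset.mem_univ _
  · intro x _; exact Finset.mem_range.mpr (ZMod.val_lt x)
  · intro i hi; exact ZMod.val_cast_of_lt (Finset.mem_range.mp hi)
  · intro x _; exact ZMod.natCast_rightInverse x
  · intro i _; rfl

private lemma pr_cast_zero_aux {p : ℕ} (r : ℕ) (hr : 0 < r) :
    ((p ^ r : ℕ) : ZMod p) = 0 := by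
  push_cast
  rw [ZMod.natCast_self, zero_pow hr.ne']

/-- Reconstruction for normalized cocycles: if `c 0 0 = 0` and
`∑ x, c x 1 = 0`, then `c` is a coboundary. -/
private lemma recon_norm_aux (p r : ℕ) (hr : 0 < r) [NeZero (p ^ r)]
    (c : ZMod (p ^ r) → ZMod (p ^ r) → ZMod p)
    (hc : ∀ x y z : ZMod (p ^ r), c y z + c x (y + z) = c x y + c (x + y) z)
    (h00 : c 0 0 = 0)
    (hS : ∑ x : ZMod (p ^ r), c x 1 = 0) :
    ∃ v : ZMod (p ^ r) → ZMod p, ∀ x y, c x y = v x + v y - v (x + y) := by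
  have hx0 : ∀ x, c x 0 = 0 := by
    intro x
    have h := hc x 0 0
    simp only [add_zero] at h
    have : c 0 0 = c x 0 := by linear_combination h
    rw [← this, h00]
  set w : ℕ → ZMod p := fun k => ∑ i ∈ Finset.range k, c (i : ZMod (p ^ r)) 1 with hw
  have hw0 : w 0 = 0 := by simp [hw]
  have hwsucc : ∀ k : ℕ, w (k + 1) = w k + c (k : ZMod (p ^ r)) 1 := by
    intro k
    simp only [hw]
    rw [Finset.sum_range_succ]
  have hvalcast : ∀ x : ZMod (p ^ r), ((x.val : ℕ) : ZMod (p ^ r)) = x :=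
    fun x => ZMod.natCast_rightInverse x
  have key : ∀ (b : ℕ) (x : ZMod (p ^ r)),
      c x (b : ZMod (p ^ r)) = w (x.val + b) - w x.val - w b := by
    intro b
    induction b with
    | zero =>
      intro x
      simp [hx0, hw0]
    | succ b ih =>
      intro x
      have h1 := hc x (b : ZMod (p ^ r)) 1
      have hb1 : ((b + 1 : ℕ) : ZMod (p ^ r)) = (b : ZMod (p ^ r)) + 1 := by push_cast; ring
      rw [hb1]
      have hxb : ((x.val + b : ℕ) : ZMod (p ^ r)) = x + (b : ZMod (p ^ r)) := by
        rw [Nat.cast_add, hvalcast x]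
      have e1 : w (x.val + (b + 1)) = w (x.val + b) + c (x + (b : ZMod (p ^ r))) 1 := by
        have := hwsucc (x.val + b)
        rw [hxb] at this
        rw [← Nat.add_assoc] at *
        exact this
      have e2 := hwsucc b
      linear_combination h1 + ih x - e1 + e2
  have hwn : w (p ^ r) = 0 := by
    have : w (p ^ r) = ∑ x : ZMod (p ^ r), c x 1 := by
      simp only [hw]
      exact sum_range_zmod_aux (fun x => c x 1)
    rw [this, hS]
  have wper : ∀ k, w (k + p ^ r) = w k := by
    intro k
    induction k with
    | zero => simpa [hw0] using hwn
    | succ k ih =>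
      have hkn : ((k + p ^ r : ℕ) : ZMod (p ^ r)) = (k : ZMod (p ^ r)) := by
        rw [Nat.cast_add, ZMod.natCast_self, add_zero]
      have h3 : k + 1 + p ^ r = (k + p ^ r) + 1 := by omega
      rw [h3, hwsucc (k + p ^ r), hkn, ih, hwsucc k]
  have wq : ∀ q k, w (k + q * (p ^ r)) = w k := by
    intro q
    induction q with
    | zero => intro k; simp
    | succ q ih =>
      intro k
      have h3 : k + (q + 1) * (p ^ r) = (k + q * (p ^ r)) + p ^ r := by ring
      rw [h3, wper, ih]
  have wmod : ∀ k, w k = w (k % (p ^ r)) := by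
    intro k
    conv_lhs => rw [← Nat.mod_add_div' k (p ^ r)]
    exact wq _ _
  refine ⟨fun x => - w x.val, ?_⟩
  intro x y
  have hk := key y.val x
  rw [hvalcast y] at hk
  have hvadd : (x + y).val = (x.val + y.val) % (p ^ r) := ZMod.val_add x y
  have h4 : w (x.val + y.val) = w ((x + y).val) := by rw [wmod (x.val + y.val), hvadd]
  rw [h4] at hk
  linear_combination hk

/-- Reconstruction: a cocycle with `∑ x, c x 1 = 0` is a coboundary. -/
private lemma recon_aux (p r : ℕ) (hp : p.Prime) (hr : 0 < r) [NeZero (p ^ r)]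
    (c : ZMod (p ^ r) → ZMod (p ^ r) → ZMod p)
    (hc : ∀ x y z : ZMod (p ^ r), c y z + c x (y + z) = c x y + c (x + y) z)
    (hS : ∑ x : ZMod (p ^ r), c x 1 = 0) :
    ∃ v : ZMod (p ^ r) → ZMod p, ∀ x y, c x y = v x + v y - v (x + y) := by
  set e := c 0 0 with he
  obtain ⟨v', hv'⟩ := recon_norm_aux p r hr (fun x y => c x y - e)
    (fun x y z => by linear_combination hc x y z)
    (by ring)
    (by
      have hcard : (Finset.univ : Finset (ZMod (p ^ r))).card = p ^ r := by
        rw [Finset.card_univ, ZMod.card]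
      have h5 : ∑ x : ZMod (p ^ r), (c x 1 - e) =
          (∑ x : ZMod (p ^ r), c x 1) - (p ^ r) • e := by
        rw [Finset.sum_sub_distrib, Finset.sum_const, hcard]
      rw [h5, hS, nsmul_eq_mul, pr_cast_zero_aux r hr]
      ring)
  refine ⟨fun x => v' x + e, ?_⟩
  intro x y
  have h6 := hv' x y
  linear_combination h6

/-- Let `c` be a 2-cocycle on `ℤ/p^rℤ` with values in `ℤ/pℤ`
(trivial action), `σ` a unit of `ℤ/p^rℤ` with `σ^(p-1) = 1`, and
`d(x,y) = c(σx, σy)`. If `c` is not a 2-coboundary, then `d` is cohomologous to `c`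
if and only if `σ = 1`. -/
theorem twoCocycle_scaled_cohomologous_iff (p r : ℕ) (hp : p.Prime) (hr : 0 < r)
    (c : ZMod (p ^ r) → ZMod (p ^ r) → ZMod p)
    (hc : ∀ x y z : ZMod (p ^ r), c y z + c x (y + z) = c x y + c (x + y) z)
    (σ : (ZMod (p ^ r))ˣ) (hσ : σ ^ (p - 1) = 1)
    (hcb : ¬ ∃ v : ZMod (p ^ r) → ZMod p, ∀ x y, c x y = v x + v y - v (x + y)) :
    (∃ v : ZMod (p ^ r) → ZMod p, ∀ x y,
        c ((σ : ZMod (p ^ r)) * x) ((σ : ZMod (p ^ r)) * y) - c x y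
          = v x + v y - v (x + y)) ↔ σ = 1 := by
  haveI : NeZero (p ^ r) := ⟨pow_ne_zero _ hp.pos.ne'⟩
  haveI : Fact p.Prime := ⟨hp⟩
  constructor
  · rintro ⟨v, hv⟩
    -- the sum invariant
    set S : ZMod p := ∑ x : ZMod (p ^ r), c x 1 with hSdef
    have hSne : S ≠ 0 := fun h0 => hcb (recon_aux p r hp hr c hc h0)
    have hcard : (Finset.univ : Finset (ZMod (p ^ r))).card = p ^ r := by
      rw [Finset.card_univ, ZMod.card]
    -- sum of any coboundary vanishes
    have hcob0 : ∑ x : ZMod (p ^ r), (v x + v 1 - v (x + 1)) = 0 := by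
      have h1 : ∑ x : ZMod (p ^ r), v (x + 1) = ∑ x : ZMod (p ^ r), v x :=
        Fintype.sum_equiv (Equiv.addRight (1 : ZMod (p ^ r)))
          (fun x => v (x + 1)) v (fun x => rfl)
      rw [Finset.sum_sub_distrib, Finset.sum_add_distrib, h1, Finset.sum_const, hcard,
        nsmul_eq_mul, pr_cast_zero_aux r hr]
      ring
    -- hence the scaled sum equals S
    have hsum1 : ∑ x : ZMod (p ^ r),
        (c ((σ : ZMod (p ^ r)) * x) ((σ : ZMod (p ^ r)) * 1) - c x 1) = 0 := by
      rw [Finset.sum_congr rfl (fun x _ => hv x 1)]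
      exact hcob0
    have hre : ∑ x : ZMod (p ^ r), c ((σ : ZMod (p ^ r)) * x) ((σ : ZMod (p ^ r))) =
        ∑ x : ZMod (p ^ r), c x ((σ : ZMod (p ^ r))) :=
      Fintype.sum_bijective (fun x => (σ : ZMod (p ^ r)) * x) (Units.mulLeft_bijective σ)
        _ _ (fun x => rfl)
    have hTσ : ∑ x : ZMod (p ^ r), c x ((σ : ZMod (p ^ r))) = S := by
      rw [Finset.sum_sub_distrib] at hsum1
      rw [← hre]
      rw [mul_one] at hsum1
      linear_combination hsum1
    -- additivity of T a = ∑ x, c x a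
    have Tadd : ∀ a b : ZMod (p ^ r),
        (∑ x : ZMod (p ^ r), c x (a + b)) =
          (∑ x : ZMod (p ^ r), c x a) + (∑ x : ZMod (p ^ r), c x b) := by
      intro a b
      have h1 : ∑ x : ZMod (p ^ r), (c a b + c x (a + b)) =
          ∑ x : ZMod (p ^ r), (c x a + c (x + a) b) :=
        Finset.sum_congr rfl (fun x _ => hc x a b)
      have h2 : ∑ x : ZMod (p ^ r), c (x + a) b = ∑ x : ZMod (p ^ r), c x b :=
        Fintype.sum_equiv (Equiv.addRight a) (fun x => c (x + a) b) (fun x => c x b)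
          (fun x => rfl)
      rw [Finset.sum_add_distrib, Finset.sum_add_distrib, h2, Finset.sum_const, hcard,
        nsmul_eq_mul, pr_cast_zero_aux r hr] at h1
      linear_combination h1
    have Tnat : ∀ k : ℕ, (∑ x : ZMod (p ^ r), c x (k : ZMod (p ^ r))) = (k : ZMod p) * S := by
      intro k
      induction k with
      | zero =>
        have h := Tadd 0 0
        rw [add_zero] at h
        simp only [Nat.cast_zero, zero_mul]
        linear_combination -h
      | succ k ih =>
        have h := Tadd (k : ZMod (p ^ r)) 1
        push_cast
        linear_combination h + ih - hSdef
    have hvs : (((σ : ZMod (p ^ r)).val : ℕ) : ZMod (p ^ r)) = (σ : ZMod (p ^ r)) :=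
      ZMod.natCast_rightInverse _
    have hval1 : (((σ : ZMod (p ^ r)).val : ℕ) : ZMod p) = 1 := by
      have h := Tnat (σ : ZMod (p ^ r)).val
      rw [hvs, hTσ] at h
      have h2 : ((((σ : ZMod (p ^ r)).val : ℕ) : ZMod p) - 1) * S = 0 := by
        linear_combination -h
      rcases mul_eq_zero.mp h2 with h3 | h3
      · linear_combination h3
      · exact absurd h3 hSne
    -- p ∣ val σ - 1 over ℤ
    have hdvd1 : (p : ℤ) ∣ (((σ : ZMod (p ^ r)).val : ℕ) : ℤ) - 1 := by
      have h7 : (((((σ : ZMod (p ^ r)).val : ℕ) : ℤ) - 1 : ℤ) : ZMod p) = 0 := by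
        push_cast
        rw [hval1]
        ring
      exact (ZMod.intCast_zmod_eq_zero_iff_dvd _ _).mp h7
    have hdvd2 := dvd_sub_pow_of_dvd_sub hdvd1 (r - 1)
    rw [Nat.sub_add_cancel hr] at hdvd2
    have hdvd3 : ((p ^ r : ℕ) : ℤ) ∣
        (((σ : ZMod (p ^ r)).val : ℕ) : ℤ) ^ (p ^ (r - 1)) - 1 ^ (p ^ (r - 1)) := by
      exact_mod_cast hdvd2
    have hpow1 : (σ : ZMod (p ^ r)) ^ (p ^ (r - 1)) = 1 := by
      have h := (ZMod.intCast_zmod_eq_zero_iff_dvd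
        ((((σ : ZMod (p ^ r)).val : ℕ) : ℤ) ^ (p ^ (r - 1)) - 1 ^ (p ^ (r - 1))) (p ^ r)).mpr
        hdvd3
      push_cast at h
      rw [hvs] at h
      linear_combination h
    have hordσ : σ ^ (p ^ (r - 1)) = 1 := by
      apply Units.ext
      rw [Units.val_pow_eq_pow_val]
      simpa using hpow1
    have d1 := orderOf_dvd_of_pow_eq_one hordσ
    have d2 := orderOf_dvd_of_pow_eq_one hσ
    have hcop : Nat.Coprime (p ^ (r - 1)) (p - 1) := by
      apply Nat.Coprime.pow_left
      have hps : p - 1 + 1 = p := Nat.succ_pred_eq_of_pos hp.pos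
      rw [← hps]
      simp [Nat.Coprime, Nat.succ_sub_one, Nat.gcd_self_add_left]
    have hgcd : Nat.gcd (p ^ (r - 1)) (p - 1) = 1 := hcop
    have hd1 : orderOf σ ∣ 1 := by
      have h8 := Nat.dvd_gcd d1 d2
      rwa [hgcd] at h8
    exact orderOf_eq_one_iff.mp (Nat.dvd_one.mp hd1)
  · rintro rfl
    exact ⟨fun _ => 0, fun x y => by simp⟩
end

section
/- Let A be an abelian group, G = Aut(A) its automorphism group acting on A naturally by g·a = g(a), and let q be an integer such that multiplication by q is an automorphism of A. Then (q − 1) annihilates H¹(G, A), i.e., (q−1)·x = 0 for every x ∈ H¹(G, A). -/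
/-!
If a central element `c` of `G` acts on `A` as the scalar `r`, then for a 1-cocycle `f` the
cocycle identity applied to `f (g * c) = f (c * g)` gives `(r - 1) • f g = g • f c - f c`, so
`(r - 1) • f` is the coboundary of `f c`. Multiplication by `q` is such a central element of
`Aut(A)`, acting as the scalar `q`.
-/

/-- The multiplicative group structure on `AddAut A` (composition), which Mathlib had as an
instance in the original version and has since replaced by an additive group structure. -/
instance AddAut.group (A : Type*) [Add A] : Group (AddAut A) where
  mul g h := AddEquiv.trans h g
  one := AddEquiv.refl _
  inv := AddEquiv.symm
  mul_assoc _ _ _ := rfl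
  one_mul _ := rfl
  mul_one _ := rfl
  inv_mul_cancel := AddEquiv.self_trans_symm

/-- The natural representation of `G = Aut(A)` on the abelian group `A`, given by
`g · a = g(a)`. -/
noncomputable def natRep (A : Type) [AddCommGroup A] : Representation ℤ (AddAut A) A where
  toFun g := AddMonoidHom.toIntLinearMap (AddEquiv.toAddMonoidHom g)
  map_one' := by ext a; rfl
  map_mul' g h := by ext a; rfl

universe u

namespace groupCohomology

variable {k G : Type u} [CommRing k] [Group G] {A : Rep.{u} k G}

theorem cocycles₁_add_eq_of_commute (f : cocycles₁ A) {g h : G} (hgh : Commute g h) :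
    A.ρ g (f h) + f g = A.ρ h (f g) + f h := by
  rw [← (mem_cocycles₁_iff f).1 f.2, ← (mem_cocycles₁_iff f).1 f.2, hgh.eq]

theorem sub_one_smul_H1_eq_zero_of_mem_center {c : G} (hc : c ∈ Subgroup.center G) {r : k}
    (hρ : A.ρ c = r • 1) (x : H1 A) : (r - 1) • x = 0 := by
  induction x using H1_induction_on with | h f => ?_
  rw [← map_smul, H1π_eq_zero_iff]
  refine ⟨f c, funext fun g => ?_⟩
  have hfg := cocycles₁_add_eq_of_commute f (Subgroup.mem_center_iff.1 hc g)
  simp only [hρ, LinearMap.smul_apply, Module.End.one_apply] at hfg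
  show A.ρ g (f c) - f c = (r - 1) • f g
  rw [sub_smul, one_smul]
  linear_combination (norm := abel) hfg

end groupCohomology

theorem AddAut.mem_center_of_forall_apply_eq_zsmul {A : Type*} [AddCommGroup A] {c : AddAut A}
    {q : ℤ} (hc : ∀ a, c a = q • a) : c ∈ Subgroup.center (AddAut A) :=
  Subgroup.mem_center_iff.2 fun g => AddEquiv.ext fun a => by
    show g (c a) = c (g a)
    rw [hc, hc, map_zsmul]

open groupCohomology in
/-- Let `A` be an abelian group, `G = Aut(A)` acting naturally on `A`,
and `q` an integer such that multiplication by `q` is an automorphism of `A`. Then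
`q - 1` annihilates `H¹(G, A)`. -/
theorem sub_one_annihilates_H1_natural (A : Type) [AddCommGroup A] (q : ℤ)
    (hq : Function.Bijective fun a : A => q • a) :
    ∀ x : H1 (Rep.of (natRep A)), (q - 1) • x = 0 := by
  let c : AddAut A := AddEquiv.ofBijective (zsmulAddGroupHom q) hq
  have hc : ∀ a, c a = q • a := fun _ => rfl
  intro x
  rw [← int_smul_eq_zsmul]
  exact sub_one_smul_H1_eq_zero_of_mem_center (A := Rep.of (natRep A))
    (AddAut.mem_center_of_forall_apply_eq_zsmul hc) (LinearMap.ext hc) x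
end

section
/- Let p be an odd prime, λ = (λ₁ > λ₂ > … > λ_k ≥ 1) a partition with multiplicities ρ₁, …, ρ_k ≥ 1, A_λ = ⊕_{i=1}^{k} (ℤ/p^{λ_i}ℤ)^{ρ_i} the associated finite abelian p-group, and G_λ = Aut(A_λ). Then H¹(G_λ, A_λ) = 0 for the natural action of G_λ on A_λ. Moreover, for p = 2, H¹(G_λ, A_λ) with the natural action is a finite elementary abelian 2-group (every element is annihilated by 2). -/
/-- The finite abelian `p`-group `A_λ = ⊕_{i=1}^{k} (ℤ/p^{λ_i}ℤ)^{ρ_i}` associated to a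
partition `λ` with multiplicities `ρ`. -/
abbrev abelianPGroupOfPartition (p k : ℕ) (lam rho : Fin k → ℕ) : Type :=
  (i : Fin k) → Fin (rho i) → ZMod (p ^ lam i)

namespace groupCohomology

variable {k G : Type} [CommRing k] [Group G] {A : Rep k G}

theorem H1π_surjective (A : Rep k G) : Function.Surjective (H1π A) :=
  (ModuleCat.epi_iff_surjective _).1 inferInstance

theorem zsmul_H1_eq_zero_of_forall_zsmul_eq_zero {n : ℤ} (hA : ∀ a : A, n • a = 0)
    (x : H1 A) : n • x = 0 := by
  induction x using H1_induction_on with | h f => ?_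
  have hf : n • f = 0 := cocycles₁_ext fun g => hA (f g)
  rw [← map_zsmul, hf, map_zero]

theorem two_zsmul_H1_eq_zero_of_mem_center {z : G} (hz : z ∈ Subgroup.center G)
    (hzA : ∀ a : A, A.ρ z a = -a) (x : H1 A) : (2 : ℤ) • x = 0 := by
  induction x using H1_induction_on with | h f => ?_
  rw [← map_zsmul, H1π_eq_zero_iff]
  refine ⟨-f z, funext fun g => ?_⟩
  have hgz := (mem_cocycles₁_iff f).1 f.2 g z
  have hzg := (mem_cocycles₁_iff f).1 f.2 z g
  rw [← Subgroup.mem_center_iff.1 hz g, hgz, hzA] at hzg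
  rw [d₀₁_hom_apply, map_neg]
  show _ = (2 : ℤ) • f g
  rw [two_zsmul]
  linear_combination (norm := abel) -hzg

theorem subsingleton_H1_of_mem_center_of_odd {z : G} (hz : z ∈ Subgroup.center G)
    (hzA : ∀ a : A, A.ρ z a = -a) {n : ℤ} (hn : Odd n) (hA : ∀ a : A, n • a = 0) :
    Subsingleton (H1 A) := by
  refine subsingleton_of_forall_eq 0 fun x => ?_
  obtain ⟨t, rfl⟩ := hn
  calc x = (2 * t + 1) • x - t • (2 : ℤ) • x := by
        rw [smul_smul, add_smul, one_smul, mul_comm]; abel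
    _ = 0 := by rw [zsmul_H1_eq_zero_of_forall_zsmul_eq_zero hA,
      two_zsmul_H1_eq_zero_of_mem_center hz hzA, smul_zero, sub_zero]

theorem finite_H1 [Finite G] [Finite A] : Finite (H1 A) :=
  Finite.of_surjective _ (H1π_surjective A)

end groupCohomology

theorem AddAut.neg_mem_center (M : Type) [AddCommGroup M] :
    AddEquiv.neg M ∈ Subgroup.center (AddAut M) :=
  Subgroup.mem_center_iff.2 fun g => AddEquiv.ext fun a => map_neg g a

open groupCohomology in
theorem two_zsmul_H1_natRep_eq_zero (M : Type) [AddCommGroup M] (x : H1 (Rep.of (natRep M))) :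
    (2 : ℤ) • x = 0 :=
  two_zsmul_H1_eq_zero_of_mem_center (AddAut.neg_mem_center M) (fun _ => rfl) x

namespace abelianPGroupOfPartition

variable {p k : ℕ} {lam rho : Fin k → ℕ}

theorem finite_of_ne_zero (hp : p ≠ 0) : Finite (abelianPGroupOfPartition p k lam rho) :=
  have (i : Fin k) : NeZero (p ^ lam i) := ⟨pow_ne_zero _ hp⟩
  inferInstance

theorem pow_sum_zsmul_eq_zero (a : abelianPGroupOfPartition p k lam rho) :
    ((p ^ ∑ i, lam i : ℕ) : ℤ) • a = 0 := by
  funext i j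
  have hdvd : p ^ lam i ∣ p ^ ∑ i, lam i :=
    pow_dvd_pow p (Finset.single_le_sum (fun _ _ => Nat.zero_le _) (Finset.mem_univ i))
  show ((p ^ ∑ i, lam i : ℕ) : ℤ) • a i j = 0
  rw [natCast_zsmul, nsmul_eq_mul, (ZMod.natCast_eq_zero_iff _ _).2 hdvd, zero_mul]

end abelianPGroupOfPartition

open groupCohomology in
theorem H1_natural_action_of_partition_general (p k : ℕ) (lam rho : Fin k → ℕ) :
    (Odd p →
      Subsingleton (H1 (Rep.of (natRep (abelianPGroupOfPartition p k lam rho))))) ∧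
    (p = 2 →
      Finite (H1 (Rep.of (natRep (abelianPGroupOfPartition p k lam rho)))) ∧
      ∀ x : H1 (Rep.of (natRep (abelianPGroupOfPartition p k lam rho))),
        (2 : ℤ) • x = 0) := by
  refine ⟨fun hp => ?_, ?_⟩
  · exact subsingleton_H1_of_mem_center_of_odd (AddAut.neg_mem_center _) (fun _ => rfl)
      (by exact_mod_cast hp.pow) abelianPGroupOfPartition.pow_sum_zsmul_eq_zero
  · rintro rfl
    have := abelianPGroupOfPartition.finite_of_ne_zero (lam := lam) (rho := rho) two_ne_zero
    exact ⟨finite_H1, two_zsmul_H1_natRep_eq_zero _⟩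

open groupCohomology in
/-- For a partition `λ₁ > … > λ_k ≥ 1` with multiplicities `ρᵢ ≥ 1`,
`A_λ = ⊕ (ℤ/p^{λᵢ}ℤ)^{ρᵢ}` and `G_λ = Aut(A_λ)` acting naturally: if `p` is an odd prime
then `H¹(G_λ, A_λ) = 0`; and if `p = 2` then `H¹(G_λ, A_λ)` is a finite elementary
abelian `2`-group. -/
theorem H1_natural_action_of_partition (p k : ℕ) (hp : p.Prime) (hk : 0 < k)
    (lam rho : Fin k → ℕ) (hlam : StrictAnti lam) (hlam1 : ∀ i, 1 ≤ lam i)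
    (hrho : ∀ i, 1 ≤ rho i) :
    (Odd p →
      Subsingleton (H1 (Rep.of (natRep (abelianPGroupOfPartition p k lam rho))))) ∧
    (p = 2 →
      Finite (H1 (Rep.of (natRep (abelianPGroupOfPartition p k lam rho)))) ∧
      ∀ x : H1 (Rep.of (natRep (abelianPGroupOfPartition p k lam rho))),
        (2 : ℤ) • x = 0) :=
  H1_natural_action_of_partition_general p k lam rho
end

section
/- Let p be a prime and n, k positive integers. (1) If k ≥ 2, then p divides the order of the abelianization GL_n(ℤ/p^kℤ)/[GL_n(ℤ/p^kℤ), GL_n(ℤ/p^kℤ)]. (2) If k = 1 and p is odd, then p does not divide the order of GL_n(ℤ/pℤ)/[GL_n(ℤ/pℤ), GL_n(ℤ/pℤ)]. (3) If k = 1 and p = 2, then 2 does not divide the order of GL_n(ℤ/2ℤ)/[GL_n(ℤ/2ℤ), GL_n(ℤ/2ℤ)] if and only if n ≥ 3 or n = 1. -/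
open Matrix
open scoped commutatorElement


section helpers
variable {F : Type*} [Field F] {n : ℕ}

lemma transvec_comm (i j k : Fin n) (hij : i ≠ j) (hik : i ≠ k) (hkj : k ≠ j) (c : F) :
    transvection i k c * transvection k j 1 * transvection i k (-c) * transvection k j (-1)
      = transvection i j c := by
  simp only [transvection, add_mul, mul_add, one_mul, mul_one,
    Matrix.single_mul_single_same,
    Matrix.single_mul_single_of_ne _ _ _ _ hkj.symm,
    Matrix.single_mul_single_of_ne _ _ _ _ hik.symm,
    Matrix.single_mul_single_of_ne _ _ _ _ hij.symm]
  ext a b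
  simp only [Matrix.add_apply, Matrix.zero_apply, Matrix.mul_apply, Matrix.single, of_apply,
    Matrix.one_apply, Finset.sum_ite_eq, Finset.mem_univ]
  split_ifs <;> simp_all

lemma diag_conj_transvec (i j : Fin n) (hij : i ≠ j) (c u : F) (hu : u ≠ 0) :
    diagonal (fun x => if x = i then u else 1) * transvection i j c
      * diagonal (fun x => if x = i then u⁻¹ else 1) = transvection i j (u * c) := by
  ext a b
  rw [Matrix.mul_assoc, Matrix.diagonal_mul, Matrix.mul_diagonal]
  simp only [transvection, Matrix.add_apply, Matrix.one_apply, Matrix.single, of_apply]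
  rcases eq_or_ne a i with rfl | ha
  · rcases eq_or_ne b a with rfl | hb
    · have hj : ¬ (j = b) := fun h => hij h.symm
      simp [hj, hu]
    · have hba : ¬ (b = a) := hb
      have hab : ¬ (a = b) := fun h => hb h.symm
      rcases eq_or_ne j b with rfl | hj
      · simp [hba, hab, hij]
      · have h2 : ¬ (a = a ∧ j = b) := by simp [hj]
        simp [hba, hab, h2]
  · have hia : ¬ (i = a) := fun h => ha h.symm
    have h3 : ¬ (i = a ∧ j = b) := by simp [hia]
    rcases eq_or_ne b i with rfl | hb
    · have hab : ¬ (a = b) := fun h => ha h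
      simp [ha, hab, h3]
    · simp [ha, hb, h3]

lemma diag_mul_transvec (i j : Fin n) (hij : i ≠ j) (c u : F) (hu : u ≠ 0) :
    diagonal (fun x => if x = i then u else 1) * transvection i j c
      = transvection i j (u * c) * diagonal (fun x => if x = i then u else 1) := by
  have hinv : diagonal (fun x : Fin n => if x = i then u⁻¹ else 1)
      * diagonal (fun x => if x = i then u else 1) = 1 := by
    rw [diagonal_mul_diagonal]
    convert Matrix.diagonal_one using 2
    ext x; by_cases h : x = i <;> simp [h, inv_mul_cancel₀ hu]
  calc diagonal (fun x => if x = i then u else 1) * transvection i j c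
      = diagonal (fun x => if x = i then u else 1) * transvection i j c
        * (diagonal (fun x : Fin n => if x = i then u⁻¹ else 1)
          * diagonal (fun x => if x = i then u else 1)) := by rw [hinv, Matrix.mul_one]
    _ = (diagonal (fun x => if x = i then u else 1) * transvection i j c
        * diagonal (fun x : Fin n => if x = i then u⁻¹ else 1))
          * diagonal (fun x => if x = i then u else 1) := by
            simp only [Matrix.mul_assoc]
    _ = transvection i j (u * c) * diagonal (fun x => if x = i then u else 1) := by
          rw [diag_conj_transvec i j hij c u hu]

/-- lift a transvection to a unit -/
def transvecUnit (i j : Fin n) (hij : i ≠ j) (c : F) : (Matrix (Fin n) (Fin n) F)ˣ where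
  val := transvection i j c
  inv := transvection i j (-c)
  val_inv := by rw [transvection_mul_transvection_same _ _ hij, add_neg_cancel, transvection_zero]
  inv_val := by rw [transvection_mul_transvection_same _ _ hij, neg_add_cancel, transvection_zero]

end helpers

lemma of_transvec_eq_one (p n : ℕ) [Fact p.Prime]
    (hcase : Odd p ∨ n = 1 ∨ 3 ≤ n)
    (t : TransvectionStruct (Fin n) (ZMod p))
    (g : Matrix.GeneralLinearGroup (Fin n) (ZMod p))
    (hg : (g : Matrix (Fin n) (Fin n) (ZMod p)) = t.toMatrix) :
    Abelianization.of g = 1 := by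
  obtain ⟨i, j, hij, c⟩ := t
  rw [TransvectionStruct.toMatrix_mk] at hg
  rcases hcase with hodd | h1 | h3
  · -- p odd : conjugation by diagonal
    have hu : (2 : ZMod p) ≠ 0 := by
      intro h
      have : p ∣ 2 := by
        have := (ZMod.natCast_eq_zero_iff 2 p).mp (by exact_mod_cast h)
        exact this
      have hp2 : p = 2 := ((Nat.prime_dvd_prime_iff_eq Fact.out Nat.prime_two).mp this)
      rw [hp2] at hodd
      exact (Nat.not_odd_iff_even.mpr (by decide)) hodd
    set d : (Matrix (Fin n) (Fin n) (ZMod p))ˣ :=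
      ⟨diagonal (fun x => if x = i then (2 : ZMod p) else 1),
       diagonal (fun x => if x = i then (2 : ZMod p)⁻¹ else 1),
       by rw [diagonal_mul_diagonal]
          convert Matrix.diagonal_one using 2
          ext x; by_cases h : x = i <;> simp [h, mul_inv_cancel₀ hu],
       by rw [diagonal_mul_diagonal]
          convert Matrix.diagonal_one using 2
          ext x; by_cases h : x = i <;> simp [h, inv_mul_cancel₀ hu]⟩ with hd
    have key : d * g = (g * g) * d := by
      apply Units.ext
      rw [Units.val_mul, Units.val_mul, Units.val_mul, hg]
      show (diagonal fun x => if x = i then (2:ZMod p) else 1) * transvection i j c = _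
      rw [diag_mul_transvec i j hij c 2 hu, transvection_mul_transvection_same _ _ hij, two_mul]
    have h2 : Abelianization.of g * Abelianization.of g = Abelianization.of g := by
      have := congrArg Abelianization.of key
      simp only [_root_.map_mul] at this
      rw [mul_comm (Abelianization.of d) (Abelianization.of g)] at this
      exact (mul_right_cancel this).symm
    rwa [mul_eq_right] at h2
  · -- n = 1 : impossible
    subst h1
    exact absurd (Subsingleton.elim i j) hij
  · -- n ≥ 3 : commutator of transvections
    have : ∃ k : Fin n, k ≠ i ∧ k ≠ j := by
      have : ({i, j}ᶜ : Finset (Fin n)).Nonempty := by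
        rw [← Finset.card_pos, Finset.card_compl]
        have h2 : ({i, j} : Finset (Fin n)).card ≤ 2 := Finset.card_insert_le _ _ |>.trans (by simp)
        have hcard : Fintype.card (Fin n) = n := Fintype.card_fin n
        omega
      obtain ⟨k, hk⟩ := this
      simp only [Finset.mem_compl, Finset.mem_insert, Finset.mem_singleton, not_or] at hk
      exact ⟨k, hk.1, hk.2⟩
    obtain ⟨k, hki, hkj⟩ := this
    set a := transvecUnit i k (fun h => hki h.symm) c with ha
    set b := transvecUnit k j hkj (1 : ZMod p) with hb
    have key : g = ⁅a, b⁆ := by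
      apply Units.ext
      rw [hg]
      show _ = ((a * b * a⁻¹ * b⁻¹ : _ˣ) : Matrix (Fin n) (Fin n) (ZMod p))
      rw [Units.val_mul, Units.val_mul, Units.val_mul]
      exact (transvec_comm i j k hij (fun h => hki h.symm) hkj c).symm
    rw [key, map_commutatorElement]
    exact commutatorElement_eq_one_iff_mul_comm.mpr (mul_comm _ _)

section assembly

lemma not_dvd_of_forall_pow {A : Type*} [Group A] [Finite A] (p m : ℕ) (hp : p.Prime)
    (hm : ¬ p ∣ m) (H : ∀ a : A, a ^ m = 1) : ¬ p ∣ Nat.card A := by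
  intro hdvd
  haveI : Fact p.Prime := ⟨hp⟩
  obtain ⟨a, ha⟩ := exists_prime_orderOf_dvd_card' p hdvd
  exact hm (ha ▸ orderOf_dvd_of_pow_eq_one (H a))

lemma of_pow_eq_one (p n : ℕ) [Fact p.Prime]
    (hcase : Odd p ∨ n = 1 ∨ 3 ≤ n)
    (g : Matrix.GeneralLinearGroup (Fin n) (ZMod p)) :
    (Abelianization.of g) ^ (p - 1) = 1 := by
  have hdet : ((g : Matrix (Fin n) (Fin n) (ZMod p))).det ≠ 0 :=
    (Matrix.isUnits_det_units g).ne_zero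
  revert g
  suffices H : ∀ M : Matrix (Fin n) (Fin n) (ZMod p), M.det ≠ 0 →
      ∀ g : Matrix.GeneralLinearGroup (Fin n) (ZMod p), (g : Matrix (Fin n) (Fin n) (ZMod p)) = M →
      (Abelianization.of g) ^ (p - 1) = 1 by
    intro g hdet; exact H _ hdet g rfl
  intro M hMdet
  refine Matrix.diagonal_transvection_induction_of_det_ne_zero
    (fun M => ∀ g : Matrix.GeneralLinearGroup (Fin n) (ZMod p),
      (g : Matrix (Fin n) (Fin n) (ZMod p)) = M → (Abelianization.of g) ^ (p - 1) = 1)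
    M hMdet ?_ ?_ ?_
  · intro D hD g hg
    have hgpow : g ^ (p - 1) = 1 := by
      have hDi : ∀ i, D i ≠ 0 := by
        rw [det_diagonal] at hD
        intro i hi
        exact hD (Finset.prod_eq_zero (Finset.mem_univ i) hi)
      apply Units.ext
      rw [Units.val_pow_eq_pow_val, hg, Units.val_one, diagonal_pow]
      convert Matrix.diagonal_one using 2
      ext i
      exact ZMod.pow_card_sub_one_eq_one (hDi i)
    rw [← _root_.map_pow, hgpow, _root_.map_one]
  · intro t g hg
    rw [of_transvec_eq_one p n hcase t g hg, one_pow]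
  · intro A B hA hB PA PB g hg
    have hAu : IsUnit A := (Matrix.isUnit_iff_isUnit_det A).mpr (isUnit_iff_ne_zero.mpr hA)
    have hBu : IsUnit B := (Matrix.isUnit_iff_isUnit_det B).mpr (isUnit_iff_ne_zero.mpr hB)
    obtain ⟨a, ha⟩ := hAu
    obtain ⟨b, hb⟩ := hBu
    have hgab : g = a * b := by apply Units.ext; rw [hg, Units.val_mul, ha, hb]
    rw [hgab, _root_.map_mul, mul_pow, PA a ha, PB b hb, one_mul]

lemma of_surj {G : Type*} [Group G] : Function.Surjective (Abelianization.of (G := G)) :=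
  fun a => Quotient.exists_rep a

lemma not_dvd_main (p n : ℕ) [Fact p.Prime] (hcase : Odd p ∨ n = 1 ∨ 3 ≤ n) :
    ¬ p ∣ Nat.card (Abelianization (Matrix.GeneralLinearGroup (Fin n) (ZMod p))) := by
  have hp : p.Prime := Fact.out
  apply not_dvd_of_forall_pow p (p - 1) hp
  · intro hdvd
    have h2 := hp.two_le
    have := Nat.le_of_dvd (by omega) hdvd
    omega
  · intro a
    obtain ⟨g, rfl⟩ := of_surj a
    exact of_pow_eq_one p n hcase g

-- surjectivity of the determinant
lemma det_surj (n : ℕ) (hn : 0 < n) (R : Type*) [CommRing R] :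
    Function.Surjective (Matrix.GeneralLinearGroup.det (n := Fin n) (R := R)) := by
  intro u
  have i0 : Fin n := ⟨0, hn⟩
  refine ⟨⟨diagonal (fun x => if x = i0 then (u : R) else 1),
          diagonal (fun x => if x = i0 then ((u⁻¹ : Rˣ) : R) else 1), ?_, ?_⟩, ?_⟩
  · rw [diagonal_mul_diagonal]
    convert Matrix.diagonal_one using 2
    ext x; by_cases h : x = i0 <;> simp [h]
  · rw [diagonal_mul_diagonal]
    convert Matrix.diagonal_one using 2
    ext x; by_cases h : x = i0 <;> simp [h]
  · apply Units.ext
    simp [Matrix.GeneralLinearGroup.val_det_apply, det_diagonal, Finset.prod_ite_eq']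

-- the sign character on GL_2(F_2)
def permHom : Matrix.GeneralLinearGroup (Fin 2) (ZMod 2) →* Equiv.Perm (Fin 2 → ZMod 2) where
  toFun g :=
    { toFun := fun v => (g : Matrix (Fin 2) (Fin 2) (ZMod 2)).mulVec v
      invFun := fun v => ((g⁻¹ : Matrix.GeneralLinearGroup (Fin 2) (ZMod 2)) :
          Matrix (Fin 2) (Fin 2) (ZMod 2)).mulVec v
      left_inv := fun v => by
        show _ *ᵥ (_ *ᵥ v) = v
        rw [Matrix.mulVec_mulVec, ← Units.val_mul, inv_mul_cancel, Units.val_one, Matrix.one_mulVec]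
      right_inv := fun v => by
        show _ *ᵥ (_ *ᵥ v) = v
        rw [Matrix.mulVec_mulVec, ← Units.val_mul, mul_inv_cancel, Units.val_one,
          Matrix.one_mulVec] }
  map_one' := Equiv.ext fun v => by simp [Matrix.one_mulVec]
  map_mul' g h := Equiv.ext fun v => by
    show ((g * h : Matrix.GeneralLinearGroup (Fin 2) (ZMod 2)) : Matrix (Fin 2) (Fin 2) (ZMod 2)) *ᵥ v
      = (g : Matrix (Fin 2) (Fin 2) (ZMod 2)) *ᵥ ((h : Matrix (Fin 2) (Fin 2) (ZMod 2)) *ᵥ v)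
    rw [Units.val_mul, Matrix.mulVec_mulVec]

lemma two_dvd_GL2 :
    2 ∣ Nat.card (Abelianization (Matrix.GeneralLinearGroup (Fin 2) (ZMod 2))) := by
  set χ : Matrix.GeneralLinearGroup (Fin 2) (ZMod 2) →* ℤˣ :=
    Equiv.Perm.sign.comp permHom with hχ
  set φ := Abelianization.lift χ with hφ
  have hg0 : χ (transvecUnit (0 : Fin 2) 1 (by decide) (1 : ZMod 2)) = -1 := by
    have hperm : permHom (transvecUnit (0 : Fin 2) 1 (by decide) (1 : ZMod 2)) =
        Equiv.swap ![0, 1] ![1, 1] := by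
      apply Equiv.ext
      decide
    rw [hχ, MonoidHom.comp_apply, hperm, Equiv.Perm.sign_swap (by decide)]
  have hsurj : Function.Surjective φ := by
    intro u
    rcases Int.units_eq_one_or u with rfl | rfl
    · exact ⟨1, _root_.map_one φ⟩
    · exact ⟨Abelianization.of (transvecUnit (0 : Fin 2) 1 (by decide) (1 : ZMod 2)), by
        rw [hφ, Abelianization.lift_apply_of, hg0]⟩
  have := Subgroup.card_dvd_of_surjective φ hsurj
  simpa [Nat.card_eq_fintype_card, Fintype.card_units_int] using this

end assembly

/-- For a prime `p` and positive integers `n, k`: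
(1) if `k ≥ 2` then `p` divides the order of the abelianization of `GL_n(ℤ/p^kℤ)`;
(2) if `k = 1` and `p` is odd then `p` does not divide the order of the abelianization
of `GL_n(ℤ/pℤ)`;
(3) if `k = 1` and `p = 2` then `2` does not divide the order of the abelianization of
`GL_n(ℤ/2ℤ)` if and only if `n ≥ 3` or `n = 1`. -/
theorem dvd_card_abelianization_GL (p n k : ℕ) (hp : p.Prime) (hn : 0 < n) (hk : 0 < k) :
    (2 ≤ k →
      p ∣ Nat.card (Abelianization (Matrix.GeneralLinearGroup (Fin n) (ZMod (p ^ k))))) ∧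
    (k = 1 → Odd p →
      ¬ p ∣ Nat.card (Abelianization (Matrix.GeneralLinearGroup (Fin n) (ZMod (p ^ k))))) ∧
    (k = 1 → p = 2 →
      (¬ 2 ∣ Nat.card (Abelianization (Matrix.GeneralLinearGroup (Fin n) (ZMod (p ^ k)))) ↔
        3 ≤ n ∨ n = 1)) := by
  haveI : Fact p.Prime := ⟨hp⟩
  refine ⟨?_, ?_, ?_⟩
  · -- part 1
    intro h2k
    haveI : NeZero (p ^ k) := ⟨pow_ne_zero k hp.ne_zero⟩
    set φ := Abelianization.lift
      (Matrix.GeneralLinearGroup.det (n := Fin n) (R := ZMod (p ^ k))) with hφ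
    have hsurj : Function.Surjective φ := by
      intro u
      obtain ⟨g, hg⟩ := det_surj n hn (ZMod (p ^ k)) u
      exact ⟨Abelianization.of g, by rw [hφ, Abelianization.lift_apply_of, hg]⟩
    have hdvd1 : Nat.card (ZMod (p ^ k))ˣ ∣
        Nat.card (Abelianization (Matrix.GeneralLinearGroup (Fin n) (ZMod (p ^ k)))) :=
      Subgroup.card_dvd_of_surjective φ hsurj
    have hcard : Nat.card (ZMod (p ^ k))ˣ = p ^ (k - 1) * (p - 1) := by
      rw [Nat.card_eq_fintype_card, ZMod.card_units_eq_totient, Nat.totient_prime_pow hp hk]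
    have hpdvd : p ∣ Nat.card (ZMod (p ^ k))ˣ := by
      rw [hcard]
      exact Dvd.dvd.mul_right (dvd_pow_self p (by omega)) _
    exact hpdvd.trans hdvd1
  · -- part 2
    intro hk1 hodd
    subst hk1
    rw [pow_one]
    exact not_dvd_main p n (Or.inl hodd)
  · -- part 3
    intro hk1 hp2
    subst hk1
    subst hp2
    rw [pow_one]
    constructor
    · intro hnd
      by_contra hcon
      push_neg at hcon
      obtain ⟨h3, h1⟩ := hcon
      have hn2 : n = 2 := by omega
      subst hn2
      exact hnd two_dvd_GL2
    · intro h
      rcases h with h3 | h1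
      · exact not_dvd_main 2 n (Or.inr (Or.inr h3))
      · exact not_dvd_main 2 n (Or.inr (Or.inl h1))
end

section
/- Let p be a prime and n, k positive integers. Then H¹(GL_n(ℤ/p^kℤ), (ℤ/p^kℤ)ⁿ) ≠ 0 for the trivial action of GL_n(ℤ/p^kℤ) on the abelian group (ℤ/p^kℤ)ⁿ if and only if k ≥ 2, or k = 1 and p = 2 and n = 2. -/
open Matrix

namespace StmtAux



section Matrices

variable {n : ℕ} {R : Type*} [CommRing R]

lemma diagonal_mul_stdBasisMatrix (d : Fin n → R) (i j : Fin n) (c : R) :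
    diagonal d * Matrix.single i j c = Matrix.single i j (d i * c) := by
  ext a b
  rw [diagonal_mul]
  by_cases h1 : i = a <;> by_cases h2 : j = b <;>
    simp [Matrix.single, h1, h2]

lemma stdBasisMatrix_mul_diagonal (d : Fin n → R) (i j : Fin n) (c : R) :
    Matrix.single i j c * diagonal d = Matrix.single i j (c * d j) := by
  ext a b
  rw [mul_diagonal]
  by_cases h1 : i = a <;> by_cases h2 : j = b <;>
    simp [Matrix.single, h1, h2, mul_comm]

lemma trans_rel1 {i j k : Fin n} (hij : i ≠ j) (hik : i ≠ k) (hkj : k ≠ j) (c : R) :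
    transvection i k c * transvection k j 1 =
      transvection k j 1 * transvection i k c * transvection i j c := by
  have e1 : Matrix.single i j c * Matrix.single i k (1 : R) = 0 :=
    Matrix.single_mul_single_of_ne _ _ _ _ hij.symm _
  have e2 : Matrix.single k j (1 : R) * Matrix.single i k c = 0 :=
    Matrix.single_mul_single_of_ne _ _ _ _ hij.symm _
  have e3 : Matrix.single k j (1 : R) * Matrix.single i j c = 0 :=
    Matrix.single_mul_single_of_ne _ _ _ _ hij.symm _
  have e4 : Matrix.single i k c * Matrix.single i j c = 0 :=
    Matrix.single_mul_single_of_ne _ _ _ _ (Ne.symm hik) _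
  simp only [transvection, mul_add, add_mul, one_mul, mul_one,
    Matrix.single_mul_single_same, e1, e2, e3, e4, add_zero]
  abel

lemma trans_rel2 {i j : Fin n} (hij : i ≠ j) (c : R) :
    diagonal (Function.update (fun _ : Fin n => (1 : R)) i (2 : R)) * transvection i j c =
      transvection i j (2 * c) *
        diagonal (Function.update (fun _ : Fin n => (1 : R)) i (2 : R)) := by
  simp only [transvection, mul_add, add_mul, one_mul, mul_one,
    diagonal_mul_stdBasisMatrix, stdBasisMatrix_mul_diagonal]
  rw [Function.update_self, Function.update_of_ne (Ne.symm hij)]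
  ring_nf

end Matrices


section Vanish

variable {p n : ℕ} [Fact p.Prime]

local notation "G" => (Matrix (Fin n) (Fin n) (ZMod p))ˣ

/-- transvection as a unit -/
def tunit (t : TransvectionStruct (Fin n) (ZMod p)) : (Matrix (Fin n) (Fin n) (ZMod p))ˣ :=
  ⟨t.toMatrix, t.inv.toMatrix, t.mul_inv, t.inv_mul⟩

/-- invertible diagonal matrix as a unit -/
def dunit (D : Fin n → ZMod p) (hD : ∀ i, D i ≠ 0) : (Matrix (Fin n) (Fin n) (ZMod p))ˣ :=
  ⟨diagonal D, diagonal fun i => (D i)⁻¹,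
    by rw [diagonal_mul_diagonal, ← diagonal_one]
       exact congrArg _ (funext fun i => mul_inv_cancel₀ (hD i)),
    by rw [diagonal_mul_diagonal, ← diagonal_one]
       exact congrArg _ (funext fun i => inv_mul_cancel₀ (hD i))⟩

variable (f : (Matrix (Fin n) (Fin n) (ZMod p))ˣ → ZMod p)
  (hf : ∀ a b, f (a * b) = f a + f b)

include hf

lemma f_one : f 1 = 0 := by
  have := hf 1 1
  rw [mul_one] at this
  exact (left_eq_add.mp this)

lemma f_pow (g : G) (m : ℕ) : f (g ^ m) = m • f g := by
  induction m with
  | zero => simpa using f_one f hf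
  | succ m ih => rw [pow_succ, hf, ih, succ_nsmul]

lemma f_torsion (g : G) (hg : g ^ (p - 1) = 1) : f g = 0 := by
  have h1 : (p - 1 : ℕ) • f g = 0 := by rw [← f_pow f hf, hg, f_one f hf]
  have h2 : ((p - 1 : ℕ) : ZMod p) = -1 := by
    have hp : 1 ≤ p := (Fact.out : p.Prime).one_le
    push_cast [Nat.cast_sub hp]
    simp
  rw [nsmul_eq_mul, h2, neg_one_mul, neg_eq_zero] at h1
  exact h1

lemma f_dunit (D : Fin n → ZMod p) (hD : ∀ i, D i ≠ 0) : f (dunit D hD) = 0 := by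
  refine f_torsion f hf _ (Units.ext ?_)
  show (diagonal D : Matrix (Fin n) (Fin n) (ZMod p)) ^ (p - 1) = 1
  rw [diagonal_pow, ← diagonal_one]
  refine congrArg _ (funext fun i => ?_)
  exact ZMod.pow_card_sub_one_eq_one (hD i)


lemma f_transvection (h2 : p ≠ 2 ∨ n ≠ 2) (t : TransvectionStruct (Fin n) (ZMod p)) :
    f (tunit t) = 0 := by
  obtain ⟨i, j, hij, c⟩ := t
  have hn2 : 2 ≤ n := by
    haveI : Nontrivial (Fin n) := ⟨i, j, hij⟩
    have := Fintype.one_lt_card (α := Fin n)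
    simp at this; omega
  by_cases hp2 : p = 2
  · -- use commutator relation, n ≥ 3
    have hn3 : 3 ≤ n := by
      rcases h2 with h | h
      · exact absurd hp2 h
      · omega
    have hk : ∃ k : Fin n, k ≠ i ∧ k ≠ j := by
      by_contra hcon
      push_neg at hcon
      have hsub : (Finset.univ : Finset (Fin n)) ⊆ {i, j} := by
        intro x _
        rcases eq_or_ne x i with h | h
        · simp [h]
        · simp [hcon x h]
      have := Finset.card_le_card hsub
      simp only [Finset.card_univ, Fintype.card_fin] at this
      have h2card : ({i, j} : Finset (Fin n)).card ≤ 2 :=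
        (Finset.card_insert_le _ _).trans (by simp)
      omega
    obtain ⟨k, hki, hkj⟩ := hk
    set A : (Matrix (Fin n) (Fin n) (ZMod p))ˣ := tunit ⟨i, k, Ne.symm hki, c⟩ with hA
    set B : (Matrix (Fin n) (Fin n) (ZMod p))ˣ := tunit ⟨k, j, hkj, 1⟩ with hB
    set C : (Matrix (Fin n) (Fin n) (ZMod p))ˣ := tunit ⟨i, j, hij, c⟩ with hC
    have hrel : A * B = B * A * C := by
      apply Units.ext
      show (TransvectionStruct.mk i k (Ne.symm hki) c).toMatrix *
          (TransvectionStruct.mk k j hkj (1 : ZMod p)).toMatrix = _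
      simp only [TransvectionStruct.toMatrix_mk]
      exact trans_rel1 hij (Ne.symm hki) hkj c
    have h1 : f A + f B = f B + f A + f C := by
      rw [← hf A B, hrel, hf (B * A) C, hf B A]
    rw [add_comm (f B) (f A), add_assoc] at h1
    have := left_eq_add.mp (by rw [← add_assoc] at h1; exact h1)
    exact this
  · -- p odd, use diagonal scaling
    have h2ne : (2 : ZMod p) ≠ 0 := by
      intro hcon
      have : ((2 : ℕ) : ZMod p) = 0 := by push_cast; exact hcon
      rw [ZMod.natCast_eq_zero_iff] at this
      exact hp2 ((Nat.prime_dvd_prime_iff_eq (Fact.out : p.Prime) Nat.prime_two).mp this)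
    set d : Fin n → ZMod p := Function.update (fun _ : Fin n => (1 : ZMod p)) i (2 : ZMod p)
      with hd
    have hDne : ∀ l, d l ≠ 0 := by
      intro l
      rcases eq_or_ne l i with h | h
      · rw [hd, h, Function.update_self]; exact h2ne
      · rw [hd, Function.update_of_ne h]; exact one_ne_zero
    set D : (Matrix (Fin n) (Fin n) (ZMod p))ˣ := dunit d hDne with hDdef
    set T : (Matrix (Fin n) (Fin n) (ZMod p))ˣ := tunit ⟨i, j, hij, c⟩ with hT
    set T2 : (Matrix (Fin n) (Fin n) (ZMod p))ˣ := tunit ⟨i, j, hij, 2 * c⟩ with hT2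
    have hrel : D * T = T2 * D := by
      apply Units.ext
      show (diagonal d) * (TransvectionStruct.mk i j hij c).toMatrix =
        (TransvectionStruct.mk i j hij (2 * c)).toMatrix * diagonal d
      simp only [TransvectionStruct.toMatrix_mk]
      exact trans_rel2 hij c
    have hTT : T * T = T2 := by
      apply Units.ext
      show (TransvectionStruct.mk i j hij c).toMatrix *
          (TransvectionStruct.mk i j hij c).toMatrix =
          (TransvectionStruct.mk i j hij (2 * c)).toMatrix
      simp only [TransvectionStruct.toMatrix_mk]
      rw [transvection_mul_transvection_same (h := hij), two_mul]
    have h1 : f D + f T = f T2 + f D := by rw [← hf, hrel, hf]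
    have h2' : f T = f T2 := by
      have := h1
      rw [add_comm (f T2) (f D)] at this
      exact add_left_cancel this
    have h3 : f T2 = f T + f T := by rw [← hTT, hf]
    exact left_eq_add.mp (h2'.trans h3)

lemma f_list (h2 : p ≠ 2 ∨ n ≠ 2) (L : List (TransvectionStruct (Fin n) (ZMod p))) :
    f ((L.map tunit).prod) = 0 := by
  induction L with
  | nil => simpa using f_one f hf
  | cons t L ih =>
    rw [List.map_cons, List.prod_cons, hf, ih, f_transvection f hf h2, add_zero]

omit f hf in
lemma tunit_prod_val (L : List (TransvectionStruct (Fin n) (ZMod p))) :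
    (((L.map tunit).prod : (Matrix (Fin n) (Fin n) (ZMod p))ˣ) :
        Matrix (Fin n) (Fin n) (ZMod p)) = (L.map TransvectionStruct.toMatrix).prod := by
  have h := MonoidHom.map_list_prod (Units.coeHom (Matrix (Fin n) (Fin n) (ZMod p)))
      (L.map tunit)
  simp only [Units.coeHom_apply] at h
  rw [h, List.map_map]
  rfl

lemma f_eq_zero (h2 : p ≠ 2 ∨ n ≠ 2) (g : (Matrix (Fin n) (Fin n) (ZMod p))ˣ) : f g = 0 := by
  obtain ⟨L, L', D, hM⟩ :=
    Pivot.exists_list_transvec_mul_diagonal_mul_list_transvec (g : Matrix (Fin n) (Fin n) (ZMod p))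
  have hdet : IsUnit (g : Matrix (Fin n) (Fin n) (ZMod p)).det :=
    (Matrix.isUnit_iff_isUnit_det _).mp g.isUnit
  have hD : ∀ i, D i ≠ 0 := by
    intro i hi
    rw [hM, det_mul, det_mul, TransvectionStruct.det_toMatrix_prod,
      TransvectionStruct.det_toMatrix_prod, det_diagonal, one_mul, mul_one] at hdet
    rw [Finset.prod_eq_zero (Finset.mem_univ i) hi] at hdet
    exact not_isUnit_zero hdet
  have hg : g = (L.map tunit).prod * dunit D hD * (L'.map tunit).prod := by
    apply Units.ext
    rw [hM]
    simp only [Units.val_mul, tunit_prod_val]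
    rfl
  rw [hg, hf, hf, f_list f hf h2, f_list f hf h2, f_dunit f hf]
  simp

end Vanish


section Units2

variable (p : ℕ) [Fact p.Prime]

lemma hp1 : 1 < p := (Fact.out : p.Prime).one_lt

/-- `x ↦ x.val / p` as a map `ZMod p² → ZMod p` -/
def psi (x : ZMod (p ^ 2)) : ZMod p := ((x.val / p : ℕ) : ZMod p)

lemma key_mul (x y : ZMod (p ^ 2)) (hx : x.val % p = 1) (hy : y.val % p = 1) :
    (x * y).val % p = 1 ∧ psi p (x * y) = psi p x + psi p y := by
  have hp : 1 < p := hp1 p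
  have hp0 : 0 < p := by omega
  set a := x.val / p with ha
  set b := y.val / p with hb
  have hxv : x.val = p * a + 1 := by
    rw [ha]
    have h := Nat.div_add_mod x.val p
    rw [hx] at h
    exact h.symm
  have hyv : y.val = p * b + 1 := by
    rw [hb]
    have h := Nat.div_add_mod y.val p
    rw [hy] at h
    exact h.symm
  have hmul : (x * y).val = x.val * y.val % p ^ 2 := ZMod.val_mul x y
  have e1 : x.val * y.val = (p * ((a + b) % p) + 1) + p ^ 2 * (a * b + (a + b) / p) := by
    have hs := Nat.div_add_mod (a + b) p
    calc x.val * y.val = (p * (a + b) + 1) + p ^ 2 * (a * b) := by rw [hxv, hyv]; ring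
      _ = (p * (p * ((a + b) / p) + (a + b) % p) + 1) + p ^ 2 * (a * b) := by rw [hs]
      _ = (p * ((a + b) % p) + 1) + p ^ 2 * (a * b + (a + b) / p) := by ring
  have hlt : p * ((a + b) % p) + 1 < p ^ 2 := by
    have h1 : (a + b) % p < p := Nat.mod_lt _ hp0
    have h2 : p * ((a + b) % p) + p ≤ p * p := by nlinarith
    have h3 : p ^ 2 = p * p := by ring
    omega
  have e2 : (x * y).val = p * ((a + b) % p) + 1 := by
    rw [hmul, e1, Nat.add_mul_mod_self_left, Nat.mod_eq_of_lt hlt]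
  constructor
  · rw [e2, Nat.mul_add_mod, Nat.mod_eq_of_lt hp]
  · have e3 : (x * y).val / p = (a + b) % p := by
      rw [e2, Nat.mul_add_div hp0, Nat.div_eq_of_lt hp, add_zero]
    rw [psi, e3, ZMod.natCast_mod, Nat.cast_add]
    rfl

lemma unit_pow_val (u : (ZMod (p ^ 2))ˣ) :
    (((u : ZMod (p ^ 2))) ^ (p - 1)).val % p = 1 := by
  haveI : NeZero (p ^ 2) := ⟨pow_ne_zero 2 (Fact.out : p.Prime).ne_zero⟩
  have h1 : ZMod.castHom (dvd_pow_self p (two_ne_zero)) (ZMod p)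
      (((u : ZMod (p ^ 2))) ^ (p - 1)) = 1 := by
    have h0 : (Units.map ((ZMod.castHom (dvd_pow_self p (two_ne_zero)) (ZMod p)) :
        ZMod (p ^ 2) →* ZMod p) u) ^ (p - 1) = 1 :=
      ZMod.units_pow_card_sub_one_eq_one p _
    have h0' := congrArg (Units.val) h0
    simpa [map_pow] using h0'
  have h2 : ((((u : ZMod (p ^ 2))) ^ (p - 1)).val : ZMod p) = ((1 : ℕ) : ZMod p) := by
    rw [ZMod.natCast_val, Nat.cast_one]
    exact (ZMod.castHom_apply _).symm.trans h1
  have h3 := (ZMod.natCast_eq_natCast_iff' _ 1 p).mp h2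
  rwa [Nat.mod_eq_of_lt (hp1 p)] at h3

/-- the homomorphism `(ZMod p²)ˣ →* ZMod p`, `u ↦ (u^(p-1) - 1)/p`. -/
def phi : (ZMod (p ^ 2))ˣ →* Multiplicative (ZMod p) where
  toFun u := Multiplicative.ofAdd (psi p ((u : ZMod (p ^ 2)) ^ (p - 1)))
  map_one' := by
    haveI : Fact (1 < p ^ 2) := ⟨one_lt_pow₀ (hp1 p) two_ne_zero⟩
    simp only [Units.val_one, one_pow, psi]
    rw [ZMod.val_one, Nat.div_eq_of_lt (hp1 p)]
    simp
  map_mul' u v := by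
    have hc : ((u * v : (ZMod (p ^ 2))ˣ) : ZMod (p ^ 2)) ^ (p - 1) =
        ((u : ZMod (p ^ 2)) ^ (p - 1)) * ((v : ZMod (p ^ 2)) ^ (p - 1)) := by
      rw [Units.val_mul, mul_pow]
    simp only [hc]
    have h := (key_mul p _ _ (unit_pow_val p u) (unit_pow_val p v)).2
    rw [h]
    rfl

lemma exists_phi_ne_one : ∃ u : (ZMod (p ^ 2))ˣ, phi p u ≠ 1 := by
  haveI : NeZero (p ^ 2) := ⟨pow_ne_zero 2 (Fact.out : p.Prime).ne_zero⟩
  have hcard : p ∣ Fintype.card (ZMod (p ^ 2))ˣ := by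
    rw [ZMod.card_units_eq_totient, Nat.totient_prime_pow (Fact.out : p.Prime) (by norm_num)]
    simp [pow_succ]
  obtain ⟨u, hu⟩ := exists_prime_orderOf_dvd_card p hcard
  refine ⟨u, fun hcon => ?_⟩
  have h1 : psi p ((u : ZMod (p ^ 2)) ^ (p - 1)) = 0 := by
    simpa [phi] using congrArg Multiplicative.toAdd hcon
  set z := (u : ZMod (p ^ 2)) ^ (p - 1) with hz
  have h2 : z.val % p = 1 := unit_pow_val p u
  have hlt : z.val / p < p := by
    have hv : z.val < p ^ 2 := ZMod.val_lt z
    have hp0 : 0 < p := (Fact.out : p.Prime).pos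
    rw [Nat.div_lt_iff_lt_mul hp0]
    calc z.val < p ^ 2 := hv
      _ = p * p := by ring
  have h3 : z.val / p = 0 := by
    have hdvd : p ∣ z.val / p := (ZMod.natCast_eq_zero_iff _ p).mp h1
    exact Nat.eq_zero_of_dvd_of_lt hdvd hlt
  have hval : z.val = 1 := by
    have h := Nat.div_add_mod z.val p
    rw [h3, h2, Nat.mul_zero, Nat.zero_add] at h
    exact h.symm
  have hz1 : z = 1 := by
    have h := ZMod.natCast_zmod_val z
    rw [hval] at h
    simpa using h.symm
  have hupow : u ^ (p - 1) = 1 := by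
    apply Units.ext
    rw [Units.val_pow_eq_pow_val, ← hz, hz1, Units.val_one]
  have hdvd : orderOf u ∣ p - 1 := orderOf_dvd_of_pow_eq_one hupow
  rw [hu] at hdvd
  have hple := Nat.le_of_dvd (by have := hp1 p; omega) hdvd
  have := hp1 p
  omega

/-- embedding `ZMod p →+ ZMod (p^k)`, `x ↦ x.val * p^(k-1)`. -/
def toPK (k : ℕ) (hk : 1 ≤ k) : ZMod p →+ ZMod (p ^ k) where
  toFun x := ((x.val * p ^ (k - 1) : ℕ) : ZMod (p ^ k))
  map_zero' := by
    haveI : NeZero p := ⟨(Fact.out : p.Prime).ne_zero⟩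
    simp [ZMod.val_zero]
  map_add' x y := by
    haveI : NeZero p := ⟨(Fact.out : p.Prime).ne_zero⟩
    rw [← Nat.cast_add, ZMod.natCast_eq_natCast_iff]
    have h1 : (x + y).val ≡ x.val + y.val [MOD p] := by
      rw [ZMod.val_add]
      exact (Nat.mod_modEq _ p)
    have h2 := h1.mul_right' (p ^ (k - 1))
    have h3 : p * p ^ (k - 1) = p ^ k := by
      rw [← pow_succ']
      congr 1
      omega
    rw [h3] at h2
    calc (x + y).val * p ^ (k - 1) ≡ (x.val + y.val) * p ^ (k - 1) [MOD p ^ k] := h2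
      _ = x.val * p ^ (k - 1) + y.val * p ^ (k - 1) := by ring

lemma toPK_ne_zero (k : ℕ) (hk : 1 ≤ k) (x : ZMod p) (hx : x ≠ 0) : toPK p k hk x ≠ 0 := by
  haveI : NeZero p := ⟨(Fact.out : p.Prime).ne_zero⟩
  intro hcon
  apply hx
  have hdvd0 : (p ^ k : ℕ) ∣ x.val * p ^ (k - 1) := by
    have hcon' : ((x.val * p ^ (k - 1) : ℕ) : ZMod (p ^ k)) = 0 := hcon
    rwa [ZMod.natCast_eq_zero_iff] at hcon'
  have h3 : p ^ k = p * p ^ (k - 1) := by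
    rw [← pow_succ']
    congr 1
    omega
  rw [h3] at hdvd0
  have hpk : 0 < p ^ (k - 1) := pow_pos (Fact.out : p.Prime).pos _
  have hdvd : p ∣ x.val := by
    rcases hdvd0 with ⟨c, hc⟩
    refine ⟨c, ?_⟩
    have he : x.val * p ^ (k - 1) = (p * c) * p ^ (k - 1) := by rw [hc]; ring
    exact Nat.eq_of_mul_eq_mul_right hpk he
  have hv0 : x.val = 0 := Nat.eq_zero_of_dvd_of_lt hdvd (ZMod.val_lt x)
  have h := ZMod.natCast_zmod_val x
  rw [hv0] at h
  simpa using h.symm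

end Units2


section Construction

variable (p n k : ℕ) [Fact p.Prime]


/-- a diagonal unit with prescribed determinant -/
def diagUnit {N : ℕ} (hn : 0 < n) (w : (ZMod N)ˣ) :
    (Matrix (Fin n) (Fin n) (ZMod N))ˣ where
  val := diagonal (Function.update (fun _ : Fin n => (1 : ZMod N)) ⟨0, hn⟩ (w : ZMod N))
  inv := diagonal (Function.update (fun _ : Fin n => (1 : ZMod N)) ⟨0, hn⟩ ((w⁻¹ : (ZMod N)ˣ) : ZMod N))
  val_inv := by
    have hfun : (fun j => (Function.update (fun _ : Fin n => (1 : ZMod N)) ⟨0, hn⟩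
        (w : ZMod N) j) * (Function.update (fun _ : Fin n => (1 : ZMod N)) ⟨0, hn⟩
          ((w⁻¹ : (ZMod N)ˣ) : ZMod N) j)) = (fun _ : Fin n => (1 : ZMod N)) := by
      funext j
      rcases eq_or_ne j ⟨0, hn⟩ with h | h
      · subst h; simp
      · simp [Function.update_of_ne h]
    rw [diagonal_mul_diagonal, hfun]
    exact diagonal_one
  inv_val := by
    have hfun : (fun j => (Function.update (fun _ : Fin n => (1 : ZMod N)) ⟨0, hn⟩
        ((w⁻¹ : (ZMod N)ˣ) : ZMod N) j) * (Function.update (fun _ : Fin n => (1 : ZMod N))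
          ⟨0, hn⟩ (w : ZMod N) j)) = (fun _ : Fin n => (1 : ZMod N)) := by
      funext j
      rcases eq_or_ne j ⟨0, hn⟩ with h | h
      · subst h; simp
      · simp [Function.update_of_ne h]
    rw [diagonal_mul_diagonal, hfun]
    exact diagonal_one

lemma det_diagUnit {N : ℕ} (hn : 0 < n) (w : (ZMod N)ˣ) :
    Matrix.GeneralLinearGroup.det (diagUnit n hn w) = w := by
  apply Units.ext
  show (diagonal (Function.update (fun _ : Fin n => (1 : ZMod N)) ⟨0, hn⟩ (w : ZMod N))).det
      = (w : ZMod N)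
  rw [det_diagonal, Finset.prod_update_of_mem (Finset.mem_univ _)]
  simp

lemma exists_hom_ne_zero (hn : 0 < n) (hk2 : 2 ≤ k) :
    ∃ F : Additive ((Matrix (Fin n) (Fin n) (ZMod (p ^ k)))ˣ) →+ (Fin n → ZMod (p ^ k)),
      F ≠ 0 := by
  haveI : NeZero (p ^ k) := ⟨pow_ne_zero k (Fact.out : p.Prime).ne_zero⟩
  have hk1 : 1 ≤ k := by omega
  set c1 : (Matrix (Fin n) (Fin n) (ZMod (p ^ k)))ˣ →* (ZMod (p ^ k))ˣ :=
    Matrix.GeneralLinearGroup.det with hc1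
  set c2 : (ZMod (p ^ k))ˣ →* (ZMod (p ^ 2))ˣ := ZMod.unitsMap (pow_dvd_pow p hk2) with hc2
  set m : (Matrix (Fin n) (Fin n) (ZMod (p ^ k)))ˣ →* Multiplicative (ZMod p) :=
    (phi p).comp (c2.comp c1) with hm
  set a : Additive ((Matrix (Fin n) (Fin n) (ZMod (p ^ k)))ˣ) →+ ZMod p :=
    MonoidHom.toAdditiveLeft m with ha
  refine ⟨(AddMonoidHom.single (fun _ : Fin n => ZMod (p ^ k)) ⟨0, hn⟩).comp
    ((toPK p k hk1).comp a), fun h0 => ?_⟩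
  obtain ⟨u, hu⟩ := exists_phi_ne_one p
  obtain ⟨w, hw⟩ := ZMod.unitsMap_surjective (pow_dvd_pow p hk2) u
  set g := diagUnit n hn w with hg
  have hval := congrFun (congrArg (fun (F : Additive ((Matrix (Fin n) (Fin n) (ZMod (p ^ k)))ˣ)
      →+ (Fin n → ZMod (p ^ k))) => F (Additive.ofMul g)) h0) ⟨0, hn⟩
  simp only [AddMonoidHom.comp_apply, AddMonoidHom.single_apply, Pi.single_eq_same,
    AddMonoidHom.zero_apply, Pi.zero_apply] at hval
  have he : a (Additive.ofMul g) = Multiplicative.toAdd (phi p u) := by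
    rw [ha, MonoidHom.toAdditiveLeft_apply_apply]
    congr 1
    show ((phi p).comp (c2.comp c1)) g = phi p u
    rw [MonoidHom.comp_apply, MonoidHom.comp_apply]
    congr 1
    show c2 (Matrix.GeneralLinearGroup.det (diagUnit n hn w)) = u
    rw [det_diagUnit, hc2, hw]
  rw [he] at hval
  refine toPK_ne_zero p k hk1 _ (fun hz => hu ?_) hval
  have : Multiplicative.ofAdd (Multiplicative.toAdd (phi p u)) = Multiplicative.ofAdd 0 :=
    congrArg _ hz
  simpa using this

end Construction

section VanishHom

lemma addHom_eq_zero (p n : ℕ) [Fact p.Prime] (h2 : p ≠ 2 ∨ n ≠ 2)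
    (F : Additive ((Matrix (Fin n) (Fin n) (ZMod p))ˣ) →+ (Fin n → ZMod p)) : F = 0 := by
  ext x i
  let f : (Matrix (Fin n) (Fin n) (ZMod p))ˣ → ZMod p := fun g => F (Additive.ofMul g) i
  have hf : ∀ a b, f (a * b) = f a + f b := by
    intro a b
    show F (Additive.ofMul (a * b)) i = F (Additive.ofMul a) i + F (Additive.ofMul b) i
    have h : Additive.ofMul (a * b) = Additive.ofMul a + Additive.ofMul b := rfl
    rw [h, F.map_add]
    rfl
  exact f_eq_zero f hf h2 x

end VanishHom

section TwoTwo

/-- the sign character of `GL₂(𝔽₂) ≅ S₃`. -/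
def f2 : (Matrix (Fin 2) (Fin 2) (ZMod 2))ˣ → ZMod 2 := fun g =>
  if g * g = 1 ∧ g ≠ 1 then 1 else 0

lemma f2_hom : ∀ a b, f2 (a * b) = f2 a + f2 b := by decide

lemma f2_exists : ∃ g, f2 g ≠ 0 := by decide

/-- the sign character as a bundled hom. -/
def F2 : Additive ((Matrix (Fin 2) (Fin 2) (ZMod 2))ˣ) →+ (Fin 2 → ZMod 2) where
  toFun x := fun _ => f2 x.toMul
  map_zero' := by
    funext i
    show f2 1 = 0
    decide
  map_add' x y := by
    funext i
    show f2 (x.toMul * y.toMul) = f2 x.toMul + f2 y.toMul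
    exact f2_hom _ _

lemma F2_ne : F2 ≠ 0 := by
  obtain ⟨g, hg⟩ := f2_exists
  intro h
  apply hg
  exact congrFun (congrArg (fun (F : Additive ((Matrix (Fin 2) (Fin 2) (ZMod 2))ˣ) →+
    (Fin 2 → ZMod 2)) => F (Additive.ofMul g)) h) 0

end TwoTwo

end StmtAux


open groupCohomology in
/-- For a prime `p` and positive integers `n, k`,
`H¹(GL_n(ℤ/p^kℤ), (ℤ/p^kℤ)ⁿ) ≠ 0` for the trivial action if and only if `k ≥ 2`, or
`k = 1`, `p = 2` and `n = 2`. -/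
theorem H1_trivial_GL_nonzero_iff (p n k : ℕ) (hp : p.Prime) (hn : 0 < n) (hk : 0 < k) :
    Nontrivial (H1 (Rep.trivial ℤ (Matrix.GeneralLinearGroup (Fin n) (ZMod (p ^ k)))
        (Fin n → ZMod (p ^ k)))) ↔
      2 ≤ k ∨ (k = 1 ∧ p = 2 ∧ n = 2) := by
  haveI : Fact p.Prime := ⟨hp⟩
  constructor
  · intro hnt
    by_contra hcon
    push_neg at hcon
    obtain ⟨hklt, hne⟩ := hcon
    have hk1 : k = 1 := by omega
    subst hk1
    have h2 : p ≠ 2 ∨ n ≠ 2 := by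
      by_cases hp2 : p = 2
      · exact Or.inr (hne rfl hp2)
      · exact Or.inl hp2
    rw [pow_one] at hnt
    obtain ⟨x, y, hxy⟩ := hnt
    apply hxy
    apply (groupCohomology.H1IsoOfIsTrivial
      (Rep.trivial ℤ (Matrix.GeneralLinearGroup (Fin n) (ZMod p)) (Fin n → ZMod p))).toLinearEquiv.injective
    exact (StmtAux.addHom_eq_zero p n h2 _).trans (StmtAux.addHom_eq_zero p n h2 _).symm
  · intro h
    have hex : ∃ F : Additive (Matrix.GeneralLinearGroup (Fin n) (ZMod (p ^ k))) →+
        (Fin n → ZMod (p ^ k)), F ≠ 0 := by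
      rcases h with hk2 | ⟨hk1, hp2, hn2⟩
      · exact StmtAux.exists_hom_ne_zero p n k hn hk2
      · subst hk1; subst hp2; subst hn2
        rw [pow_one]
        exact ⟨StmtAux.F2, StmtAux.F2_ne⟩
    obtain ⟨F, hF⟩ := hex
    refine ⟨(groupCohomology.H1IsoOfIsTrivial _).toLinearEquiv.symm F,
      (groupCohomology.H1IsoOfIsTrivial _).toLinearEquiv.symm 0, fun hEq => hF ?_⟩
    exact (groupCohomology.H1IsoOfIsTrivial _).toLinearEquiv.symm.injective hEq
end

section
/- Let p be any prime and λ = (λ₁ > λ₂ > … > λ_k ≥ 1) a partition with multiplicities ρ₁, …, ρ_k ≥ 1, A_λ = ⊕_{i=1}^{k} (ℤ/p^{λ_i}ℤ)^{ρ_i}, and G_λ = Aut(A_λ). If λ_i − λ_{i+1} ≥ 2 for some 1 ≤ i ≤ k−1, or if λ_k ≥ 2, then H¹(G_λ, A_λ) ≠ 0 for the trivial action of G_λ on A_λ. -/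
/-!
For the trivial action `H¹(G, A) = Hom(G, A)`, so it suffices to find a nonzero homomorphism
`Aut(A_λ) → A_λ`. The hypothesis provides `c` such that no `λᵢ` equals `c + 1` and some `λᵢ` is at
least `c + 2`. Then `A[p²] ∩ pᶜA` is a characteristic subgroup which is free over `ℤ/p²`, with one
coordinate for each cyclic summand of order at least `p^(c+2)`, and taking determinants gives a
character `χ : Aut(A_λ) → (ℤ/p²)ˣ`. Composing `χ` with the homomorphism `u ↦ u^(p-1) - 1` into
`pℤ/p²` and with an embedding `ℤ/p² ↪ A_λ` gives a homomorphism which does not vanish on the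
automorphism multiplying a single such coordinate by `1 + p`, since `(1 + p)^(p-1) - 1 = -p`.
-/

open Function

namespace ZMod

section PowIncl

def powIncl (p a b : ℕ) : ZMod (p ^ a) →+ ZMod (p ^ b) :=
  lift (p ^ a) ⟨(AddMonoidHom.mulRight ((p : ZMod (p ^ b)) ^ (b - a))).comp (Int.castAddHom _), by
    change (((p ^ a : ℕ) : ℤ) : ZMod (p ^ b)) * (p : ZMod (p ^ b)) ^ (b - a) = 0
    rw [Int.cast_natCast, ← Nat.cast_pow p (b - a), ← Nat.cast_mul, natCast_eq_zero_iff, ← pow_add]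
    exact pow_dvd_pow p (by omega)⟩

variable {p a b : ℕ}

lemma pow_smul_eq_zero_of_le {c : ℕ} (hbc : b ≤ c) (y : ZMod (p ^ b)) : p ^ c • y = 0 := by
  rw [nsmul_eq_mul, (natCast_eq_zero_iff _ _).mpr (pow_dvd_pow p hbc), zero_mul]

lemma powIncl_natCast (m : ℕ) : powIncl p a b m = m * (p : ZMod (p ^ b)) ^ (b - a) := by
  rw [← Int.cast_natCast, powIncl, lift_coe]
  simp

lemma powIncl_natCast_mul (m : ℕ) (x : ZMod (p ^ a)) :
    powIncl p a b (m * x) = m * powIncl p a b x := by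
  rw [← nsmul_eq_mul, ← nsmul_eq_mul, map_nsmul]

lemma pow_smul_powIncl (x : ZMod (p ^ a)) : p ^ a • powIncl p a b x = 0 := by
  rw [← map_nsmul, nsmul_eq_mul, natCast_self, zero_mul, map_zero]

variable [NeZero p]

lemma powIncl_apply (x : ZMod (p ^ a)) :
    powIncl p a b x = ((x.val * p ^ (b - a) : ℕ) : ZMod (p ^ b)) := by
  conv_lhs => rw [← natCast_zmod_val x]
  rw [powIncl_natCast, Nat.cast_mul, Nat.cast_pow]

lemma powIncl_injective (hab : a ≤ b) : Injective (powIncl p a b) := by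
  refine (injective_iff_map_eq_zero _).mpr fun x hx => ?_
  rw [powIncl_apply, natCast_eq_zero_iff] at hx
  have : p ^ a * p ^ (b - a) ∣ x.val * p ^ (b - a) := by rwa [← pow_add, Nat.add_sub_cancel' hab]
  rw [← natCast_zmod_val x, natCast_eq_zero_iff]
  exact Nat.dvd_of_mul_dvd_mul_right (pos_of_ne_zero (pow_ne_zero _ (NeZero.ne p))) this

lemma exists_powIncl_eq_of_pow_smul_eq_zero (hab : a ≤ b) {y : ZMod (p ^ b)}
    (hy : p ^ a • y = 0) : ∃ x, powIncl p a b x = y := by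
  rw [← natCast_zmod_val y, nsmul_eq_mul, ← Nat.cast_mul, natCast_eq_zero_iff] at hy
  have : p ^ a * p ^ (b - a) ∣ p ^ a * y.val := by rwa [← pow_add, Nat.add_sub_cancel' hab]
  obtain ⟨m, hm⟩ := Nat.dvd_of_mul_dvd_mul_left (pos_of_ne_zero (pow_ne_zero _ (NeZero.ne p))) this
  refine ⟨m, ?_⟩
  rw [powIncl_natCast, ← natCast_zmod_val y, hm]
  push_cast
  ring

lemma exists_powIncl_eq_pow_smul {c : ℕ} (hcab : c + a ≤ b) (x : ZMod (p ^ a)) :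
    ∃ y, powIncl p a b x = p ^ c • y :=
  ⟨x.val * p ^ (b - a - c), by
    have h : p ^ (b - a) = p ^ c * p ^ (b - a - c) := by rw [← pow_add]; congr 1; omega
    rw [powIncl_apply, nsmul_eq_mul, h]
    push_cast
    ring⟩

end PowIncl

section FermatQuotient

variable {p : ℕ}

lemma natCast_sq_eq_zero : (p : ZMod (p ^ 2)) ^ 2 = 0 := by
  exact_mod_cast natCast_self (p ^ 2)

lemma one_add_natCast_pow (m : ℕ) : (1 + p : ZMod (p ^ 2)) ^ m = 1 + m * p := by
  induction m with
  | zero => simp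
  | succ m ih =>
    rw [pow_succ (1 + p : ZMod (p ^ 2)), ih]
    push_cast
    linear_combination (m : ZMod (p ^ 2)) * natCast_sq_eq_zero

lemma natCast_ne_zero_of_one_lt (hp : 1 < p) : (p : ZMod (p ^ 2)) ≠ 0 := by
  rw [Ne, natCast_eq_zero_iff]
  intro h
  have := Nat.le_of_dvd (by omega) h
  nlinarith

variable [Fact p.Prime]

lemma natCast_dvd_units_pow_sub_one (u : (ZMod (p ^ 2))ˣ) :
    (p : ZMod (p ^ 2)) ∣ (u : ZMod (p ^ 2)) ^ (p - 1) - 1 := by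
  set x := (u : ZMod (p ^ 2)) ^ (p - 1) - 1
  have hx : castHom (dvd_pow_self p two_ne_zero) (ZMod p) x = 0 := by
    rw [map_sub, map_pow, map_one, pow_card_sub_one_eq_one ((u.isUnit.map _).ne_zero), sub_self]
  rw [← natCast_zmod_val x, map_natCast, natCast_eq_zero_iff] at hx
  obtain ⟨a, ha⟩ := hx
  exact ⟨a, by rw [← natCast_zmod_val x, ha, Nat.cast_mul]⟩

/-- `p` times the Fermat quotient `(u ^ (p - 1) - 1) / p`; it is additive because the ideal
`pℤ/p²ℤ` squares to zero. -/
def fermatQuotient : Additive (ZMod (p ^ 2))ˣ →+ ZMod (p ^ 2) where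
  toFun u := (u.toMul : ZMod (p ^ 2)) ^ (p - 1) - 1
  map_zero' := by simp
  map_add' u v := by
    obtain ⟨a, ha⟩ := natCast_dvd_units_pow_sub_one u.toMul
    obtain ⟨b, hb⟩ := natCast_dvd_units_pow_sub_one v.toMul
    simp only [toMul_add, Units.val_mul, mul_pow]
    linear_combination ((v.toMul : ZMod (p ^ 2)) ^ (p - 1) - 1) * ha + p * a * hb +
      a * b * natCast_sq_eq_zero

lemma fermatQuotient_of_val_eq_one_add (u : (ZMod (p ^ 2))ˣ) (hu : (u : ZMod (p ^ 2)) = 1 + p) :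
    fermatQuotient (Additive.ofMul u) = -p := by
  have hp := (Fact.out : p.Prime).one_le
  change (u : ZMod (p ^ 2)) ^ (p - 1) - 1 = -p
  rw [hu, one_add_natCast_pow, Nat.cast_sub hp, Nat.cast_one]
  linear_combination (natCast_sq_eq_zero : (p : ZMod (p ^ 2)) ^ 2 = 0)

end FermatQuotient

end ZMod

namespace AddMonoidHom

section

variable {M A : Type*} [AddCommGroup M] [AddCommGroup A] {f : M →+ A} (hf : Injective f)
  (hstable : ∀ (g : AddAut A) (m : M), g (f m) ∈ f.range)

noncomputable def restrictAddAut (g : AddAut A) : M →+ M :=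
  (ofInjective hf).symm.toAddMonoidHom.comp ((g.toAddMonoidHom.comp f).codRestrict _ (hstable g))

lemma apply_restrictAddAut (g : AddAut A) (m : M) : f (restrictAddAut hf hstable g m) = g (f m) :=
  apply_ofInjective_symm hf _

variable (n : ℕ) [Module (ZMod n) M]

noncomputable def restrictAddAutRep : Multiplicative (AddAut A) →* Module.End (ZMod n) M where
  toFun g := (restrictAddAut hf hstable g.toAdd).toZModLinearMap n
  map_one' := LinearMap.ext fun m => hf <| apply_restrictAddAut hf hstable _ m
  map_mul' g h := LinearMap.ext fun m => hf <| by
    change f (restrictAddAut hf hstable (g.toAdd + h.toAdd) m) =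
      f (restrictAddAut hf hstable g.toAdd (restrictAddAut hf hstable h.toAdd m))
    rw [apply_restrictAddAut, apply_restrictAddAut, apply_restrictAddAut, AddAut.add_apply]

lemma apply_restrictAddAutRep (g : Multiplicative (AddAut A)) (m : M) :
    f (restrictAddAutRep hf hstable n g m) = g.toAdd (f m) :=
  apply_restrictAddAut hf hstable _ m

noncomputable def detChar : Multiplicative (AddAut A) →* (ZMod n)ˣ :=
  (LinearMap.det.comp (restrictAddAutRep hf hstable n)).toHomUnits

end

variable {σ A : Type*} [Fintype σ] [DecidableEq σ] [AddCommGroup A] {n : ℕ}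
  {f : (σ → ZMod n) →+ A} (hf : Injective f)
  (hstable : ∀ (g : AddAut A) (w : σ → ZMod n), g (f w) ∈ f.range)

lemma detChar_eq_prod {g : Multiplicative (AddAut A)} {d : σ → ZMod n}
    (hg : ∀ w, g.toAdd (f w) = f (d * w)) : (detChar hf hstable n g : ZMod n) = ∏ s, d s := by
  have : restrictAddAutRep hf hstable n g = Matrix.toLin' (Matrix.diagonal d) :=
    LinearMap.ext fun w => hf <| by
      rw [apply_restrictAddAutRep, hg, Matrix.toLin'_apply]
      congr 1
      funext s
      rw [Matrix.mulVec_diagonal, Pi.mul_apply]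
  change LinearMap.det (restrictAddAutRep hf hstable n g) = _
  rw [this, LinearMap.det_toLin', Matrix.det_diagonal]

end AddMonoidHom

theorem nontrivial_addAut_hom_of_detChar_eq_one_add {p : ℕ} [Fact p.Prime] {σ A : Type*}
    [AddCommGroup A] {f : (σ → ZMod (p ^ 2)) →+ A} (hf : Injective f)
    (hstable : ∀ (g : AddAut A) (w : σ → ZMod (p ^ 2)), g (f w) ∈ f.range) (s : σ)
    {g : Multiplicative (AddAut A)}
    (hg : (f.detChar hf hstable (p ^ 2) g : ZMod (p ^ 2)) = 1 + p) :
    Nontrivial (Additive (Multiplicative (AddAut A)) →+ A) := by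
  classical
  let φ := (f.comp (AddMonoidHom.single _ s)).comp
    (ZMod.fermatQuotient.comp (MonoidHom.toAdditive (f.detChar hf hstable (p ^ 2))))
  have hφ : φ (Additive.ofMul g) = f (Pi.single s (-p)) := by
    simp [φ, ZMod.fermatQuotient_of_val_eq_one_add _ hg]
  refine nontrivial_of_ne φ 0 fun h =>
    ZMod.natCast_ne_zero_of_one_lt (Fact.out : p.Prime).one_lt ?_
  have := congr($h (Additive.ofMul g))
  rw [hφ, AddMonoidHom.zero_apply, ← map_zero f] at this
  simpa using congrFun (hf this) s

section GapIncl

variable (p : ℕ) {ι : Type*} (κ : ι → Type*) (e : ι → ℕ) (c : ℕ)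

abbrev GapIndex : Type _ := {x : Σ i, κ i // c + 2 ≤ e x.1}

def gapIncl :
    (GapIndex κ e c → ZMod (p ^ 2)) →+ ((i : ι) → κ i → ZMod (p ^ e i)) where
  toFun w i t := if h : c + 2 ≤ e i then ZMod.powIncl p 2 (e i) (w ⟨⟨i, t⟩, h⟩) else 0
  map_zero' := by funext i t; split_ifs <;> simp
  map_add' v w := by funext i t; by_cases h : c + 2 ≤ e i <;> simp [h]

def scaleAut (m : (i : ι) → κ i → ℕ) (hm : ∀ i t, (m i t).Coprime p) :
    AddAut ((i : ι) → κ i → ZMod (p ^ e i)) :=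
  AddEquiv.piCongrRight fun i => AddEquiv.piCongrRight fun t =>
    (AddAut.mulLeft (ZMod.unitOfCoprime (m i t) ((hm i t).pow_right (e i)))).toAdd

variable {p κ e c}

lemma gapIncl_apply (w : GapIndex κ e c → ZMod (p ^ 2)) (i : ι) (t : κ i) :
    gapIncl p κ e c w i t =
      if h : c + 2 ≤ e i then ZMod.powIncl p 2 (e i) (w ⟨⟨i, t⟩, h⟩) else 0 :=
  rfl

lemma scaleAut_apply (m : (i : ι) → κ i → ℕ) (hm : ∀ i t, (m i t).Coprime p)
    (x : (i : ι) → κ i → ZMod (p ^ e i)) (i : ι) (t : κ i) :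
    scaleAut p κ e m hm x i t = m i t * x i t := by
  change ((ZMod.unitOfCoprime (m i t) _ : (ZMod (p ^ e i))ˣ) : ZMod (p ^ e i)) * x i t = _
  rw [ZMod.coe_unitOfCoprime]

lemma scaleAut_gapIncl (m : (i : ι) → κ i → ℕ) (hm : ∀ i t, (m i t).Coprime p)
    (w : GapIndex κ e c → ZMod (p ^ 2)) :
    scaleAut p κ e m hm (gapIncl p κ e c w) =
      gapIncl p κ e c (fun z => (m z.1.1 z.1.2 : ZMod (p ^ 2)) * w z) := by
  funext i t
  simp only [scaleAut_apply, gapIncl_apply]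
  split_ifs
  · rw [ZMod.powIncl_natCast_mul]
  · rw [mul_zero]

variable [NeZero p]

lemma gapIncl_injective : Injective (gapIncl p κ e c) := fun v w h => funext fun z => by
  have := congrFun (congrFun h z.1.1) z.1.2
  simp only [gapIncl_apply, dif_pos z.2] at this
  exact ZMod.powIncl_injective (by have := z.2; omega) this

lemma mem_range_gapIncl_iff (hsplit : ∀ i, e i ≤ c ∨ c + 2 ≤ e i)
    {x : (i : ι) → κ i → ZMod (p ^ e i)} :
    x ∈ (gapIncl p κ e c).range ↔ p ^ 2 • x = 0 ∧ ∃ y, x = p ^ c • y := by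
  constructor
  · rintro ⟨w, rfl⟩
    have hdiv : ∀ i t, ∃ y, gapIncl p κ e c w i t = p ^ c • y := by
      intro i t
      rw [gapIncl_apply]
      split_ifs with h
      · exact ZMod.exists_powIncl_eq_pow_smul (by omega) _
      · exact ⟨0, by rw [smul_zero]⟩
    choose y hy using hdiv
    refine ⟨funext fun i => funext fun t => ?_, y, funext fun i => funext fun t => hy i t⟩
    simp only [Pi.smul_apply, gapIncl_apply, Pi.zero_apply]
    split_ifs
    · exact ZMod.pow_smul_powIncl _
    · rw [smul_zero]
  · rintro ⟨hx, y, rfl⟩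
    have hw : ∀ z : GapIndex κ e c,
        ∃ m, ZMod.powIncl p 2 (e z.1.1) m = (p ^ c • y) z.1.1 z.1.2 := fun z =>
      ZMod.exists_powIncl_eq_of_pow_smul_eq_zero (by have := z.2; omega)
        (congrFun (congrFun hx z.1.1) z.1.2)
    choose w hw using hw
    refine ⟨w, funext fun i => funext fun t => ?_⟩
    rw [gapIncl_apply]
    split_ifs with h
    · exact hw ⟨⟨i, t⟩, h⟩
    · exact (ZMod.pow_smul_eq_zero_of_le (by have := hsplit i; omega) (y i t)).symm

lemma addAut_apply_gapIncl_mem_range (hsplit : ∀ i, e i ≤ c ∨ c + 2 ≤ e i)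
    (g : AddAut ((i : ι) → κ i → ZMod (p ^ e i)))
    (w : GapIndex κ e c → ZMod (p ^ 2)) :
    g (gapIncl p κ e c w) ∈ (gapIncl p κ e c).range := by
  obtain ⟨hx, y, hy⟩ := (mem_range_gapIncl_iff hsplit).mp ⟨w, rfl⟩
  exact (mem_range_gapIncl_iff hsplit).mpr
    ⟨by rw [← map_nsmul, hx, map_zero], g y, by rw [hy, map_nsmul]⟩

end GapIncl

theorem nontrivial_addAut_hom_of_gap {p : ℕ} [Fact p.Prime] {ι : Type*} {κ : ι → Type*}
    [Fintype ι] [∀ i, Fintype (κ i)] {e : ι → ℕ} {c : ℕ} (hsplit : ∀ i, e i ≤ c ∨ c + 2 ≤ e i)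
    {i₀ : ι} (t₀ : κ i₀) (h₀ : c + 2 ≤ e i₀) :
    Nontrivial (Additive (Multiplicative (AddAut ((i : ι) → κ i → ZMod (p ^ e i)))) →+
      ((i : ι) → κ i → ZMod (p ^ e i))) := by
  classical
  let s : GapIndex κ e c := ⟨⟨i₀, t₀⟩, h₀⟩
  let m : (i : ι) → κ i → ℕ := fun i t => if (⟨i, t⟩ : Σ i, κ i) = s.1 then p + 1 else 1
  have hm : ∀ i t, (m i t).Coprime p := fun i t => by
    dsimp only [m]
    split_ifs <;> simp
  refine nontrivial_addAut_hom_of_detChar_eq_one_add gapIncl_injective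
    (addAut_apply_gapIncl_mem_range hsplit) s (g := .ofAdd (scaleAut p κ e m hm)) ?_
  rw [AddMonoidHom.detChar_eq_prod _ _ (g := .ofAdd (scaleAut p κ e m hm))
    (scaleAut_gapIncl m hm)]
  calc ∏ z : GapIndex κ e c, (m z.1.1 z.1.2 : ZMod (p ^ 2))
      = ∏ z, ((if z = s then p + 1 else 1 : ℕ) : ZMod (p ^ 2)) := by
        simp only [m, Sigma.eta, Subtype.ext_iff]
    _ = 1 + p := by
        rw [← Nat.cast_prod, Fintype.prod_ite_eq']
        push_cast
        ring

lemma exists_gap_of_antitone {k : ℕ} (hk : 0 < k) {lam : Fin k → ℕ} (hlam : Antitone lam)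
    (hgap : (∃ i j : Fin k, (j : ℕ) = (i : ℕ) + 1 ∧ lam j + 2 ≤ lam i) ∨
      2 ≤ lam ⟨k - 1, Nat.sub_lt hk Nat.one_pos⟩) :
    ∃ i₀ c, c + 2 ≤ lam i₀ ∧ ∀ j, lam j ≤ c ∨ c + 2 ≤ lam j := by
  rcases hgap with ⟨i, j, hij, hgap⟩ | hlast
  · refine ⟨i, lam i - 2, by omega, fun j' => ?_⟩
    rcases le_or_gt j' i with h | h
    · have := hlam h; omega
    · have := hlam (show j ≤ j' by rw [Fin.le_def]; omega); omega
  · refine ⟨⟨k - 1, Nat.sub_lt hk Nat.one_pos⟩, lam ⟨k - 1, Nat.sub_lt hk Nat.one_pos⟩ - 2,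
      by omega, fun j => Or.inr ?_⟩
    have := hlam (show j ≤ ⟨k - 1, Nat.sub_lt hk Nat.one_pos⟩ from
      Fin.le_def.mpr (Nat.le_sub_one_of_lt j.isLt))
    omega

open groupCohomology in
theorem H1_trivial_action_nonzero_of_gap_general (p k : ℕ) (hp : p.Prime) (hk : 0 < k)
    (lam rho : Fin k → ℕ) (hlam : StrictAnti lam)
    (hrho : ∀ i, 1 ≤ rho i)
    (hgap : (∃ i j : Fin k, (j : ℕ) = (i : ℕ) + 1 ∧ lam j + 2 ≤ lam i) ∨
      2 ≤ lam ⟨k - 1, Nat.sub_lt hk Nat.one_pos⟩) :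
    Nontrivial (H1 (Rep.trivial ℤ (Multiplicative (AddAut (abelianPGroupOfPartition p k lam rho)))
        (abelianPGroupOfPartition p k lam rho))) := by
  have : Fact p.Prime := ⟨hp⟩
  obtain ⟨i₀, c, h₀, hsplit⟩ := exists_gap_of_antitone hk hlam.antitone hgap
  have := nontrivial_addAut_hom_of_gap (p := p) (κ := fun i => Fin (rho i)) hsplit
    (⟨0, hrho i₀⟩ : Fin (rho i₀)) h₀
  exact (H1IsoOfIsTrivial _).toLinearEquiv.toEquiv.nontrivial

open groupCohomology in
/-- For any prime `p` and partition `λ₁ > … > λ_k ≥ 1` with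
multiplicities `ρᵢ ≥ 1`: if `λ_i − λ_{i+1} ≥ 2` for some `1 ≤ i ≤ k−1`, or `λ_k ≥ 2`,
then `H¹(G_λ, A_λ) ≠ 0` for the trivial action of `G_λ = Aut(A_λ)` on `A_λ`. -/
theorem H1_trivial_action_nonzero_of_gap (p k : ℕ) (hp : p.Prime) (hk : 0 < k)
    (lam rho : Fin k → ℕ) (hlam : StrictAnti lam) (hlam1 : ∀ i, 1 ≤ lam i)
    (hrho : ∀ i, 1 ≤ rho i)
    (hgap : (∃ i j : Fin k, (j : ℕ) = (i : ℕ) + 1 ∧ lam j + 2 ≤ lam i) ∨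
      2 ≤ lam ⟨k - 1, Nat.sub_lt hk Nat.one_pos⟩) :
    Nontrivial (H1 (Rep.trivial ℤ (Multiplicative (AddAut (abelianPGroupOfPartition p k lam rho)))
        (abelianPGroupOfPartition p k lam rho))) :=
  H1_trivial_action_nonzero_of_gap_general p k hp hk lam rho hlam hrho hgap
end
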